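/- arXiv:1503.08444 — 7 statements merged into one kernel-verified Lean document; each statement's English description precedes it below -/
import Mathlib

section
/- If G →v (a_1, ..., a_s) and a_i ≥ 3 for some index i, then G →v (a_1, ..., a_{i-1}, 2, a_i - 1, a_{i+1}, ..., a_s), i.e. one can split the parameter a_i into 2 and a_i - 1. -/
/-! Merge the colours `i` and `i + 1` of a colouring for the split list into the single colour `i`
and apply the hypothesis. A clique found in an unmerged colour is still monochromatic; an
`a_i`-clique in the merged colour has, by pigeonhole (`2 + (a_i - 1) ≤ a_i + 1`), two vertices of
colour `i` or `a_i - 1` vertices of colour `i + 1`. -/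

open SimpleGraph

/-- `VArrows G a` : for every coloring of the vertices of `G` with `a.length` colors,
some color class `i` contains a clique of size `a.get i`. -/
def VArrows {V : Type} [Fintype V] (G : SimpleGraph V) (a : List ℕ) : Prop :=
  ∀ c : V → Fin a.length, ∃ i : Fin a.length, ∃ S : Finset V,
    (∀ v ∈ S, c v = i) ∧ G.IsNClique (a.get i) S

open Finset

theorem List.getElem_append_cons_cons_shift {α : Type*} (l₁ l₂ : List α) (n x y : α) {j : ℕ}
    (hj : j ≠ l₁.length) (hjn : j < (l₁ ++ n :: l₂).length)
    (hjxy : (if j < l₁.length then j else j + 1) < (l₁ ++ x :: y :: l₂).length) :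
    (l₁ ++ x :: y :: l₂)[if j < l₁.length then j else j + 1] = (l₁ ++ n :: l₂)[j] := by
  split_ifs with hlt
  · simp only [List.getElem_append_left hlt]
  · obtain ⟨r, rfl⟩ : ∃ r, j = l₁.length + (r + 1) := ⟨j - l₁.length - 1, by omega⟩
    simp [List.getElem_append_right, Nat.add_assoc]

namespace SimpleGraph

variable {V : Type} {G : SimpleGraph V}

theorem IsClique.exists_isNClique_subset {S : Finset V} (hS : G.IsClique (S : Set V)) {m : ℕ}
    (hm : m ≤ #S) : ∃ T ⊆ S, G.IsNClique m T :=
  let ⟨T, hTS, hT⟩ := exists_subset_card_eq hm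
  ⟨T, hTS, hS.subset (coe_subset.2 hTS), hT⟩

theorem IsNClique.exists_isNClique_filter_or_filter_not {n x y : ℕ} {S : Finset V}
    (hS : G.IsNClique n S) (hxy : x + y ≤ n + 1) (p : V → Prop) [DecidablePred p] :
    (∃ T ⊆ S.filter p, G.IsNClique x T) ∨ ∃ T ⊆ S.filter (¬p ·), G.IsNClique y T := by
  have hcard := card_filter_add_card_filter_not (s := S) p
  have hclique (q : V → Prop) [DecidablePred q] : G.IsClique (S.filter q : Set V) :=
    hS.isClique.subset (coe_subset.2 (filter_subset q S))
  by_cases hx : x ≤ #(S.filter p)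
  · exact .inl ((hclique p).exists_isNClique_subset hx)
  · exact .inr ((hclique (¬p ·)).exists_isNClique_subset (by rw [hS.card_eq] at hcard; omega))

end SimpleGraph

theorem VArrows.split {V : Type} [Fintype V] {G : SimpleGraph V} (l₁ l₂ : List ℕ) {n x y : ℕ}
    (hxy : x + y ≤ n + 1) (h : VArrows G (l₁ ++ n :: l₂)) : VArrows G (l₁ ++ x :: y :: l₂) := by
  classical
  intro c
  have merge_lt (k : Fin (l₁ ++ x :: y :: l₂).length) :
      (if (k : ℕ) ≤ l₁.length then (k : ℕ) else k - 1) < (l₁ ++ n :: l₂).length := by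
    have := k.isLt
    simp only [List.length_append, List.length_cons] at *
    split <;> omega
  obtain ⟨j, S, hSj, hS⟩ := h fun v ↦ ⟨_, merge_lt (c v)⟩
  have hmerge (v) (hv : v ∈ S) : (if (c v : ℕ) ≤ l₁.length then (c v : ℕ) else c v - 1) = j :=
    congrArg Fin.val (hSj v hv)
  by_cases hjp : (j : ℕ) = l₁.length
  · have hn : (l₁ ++ n :: l₂).get j = n := by simp [hjp]
    rcases (hn ▸ hS).exists_isNClique_filter_or_filter_not hxy (fun v ↦ (c v : ℕ) = l₁.length) with
      ⟨T, hTS, hT⟩ | ⟨T, hTS, hT⟩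
    · exact ⟨⟨l₁.length, by simp⟩, T, fun v hv ↦ Fin.ext (mem_filter.1 (hTS hv)).2, by simpa using hT⟩
    · refine ⟨⟨l₁.length + 1, by simp⟩, T, fun v hv ↦ ?_, by simpa using hT⟩
      obtain ⟨hvS, hvp⟩ := mem_filter.1 (hTS hv)
      have := hmerge v hvS
      exact Fin.ext (show (c v : ℕ) = l₁.length + 1 by split_ifs at this <;> omega)
  · have hk : (if (j : ℕ) < l₁.length then (j : ℕ) else j + 1) < (l₁ ++ x :: y :: l₂).length := by
      have := j.isLt
      simp only [List.length_append, List.length_cons] at *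
      split_ifs <;> omega
    refine ⟨⟨_, hk⟩, S, fun v hv ↦ Fin.ext ?_, ?_⟩
    · have := hmerge v hv
      show (c v : ℕ) = if (j : ℕ) < l₁.length then (j : ℕ) else j + 1
      split_ifs at this ⊢ <;> omega
    · rw [List.get_eq_getElem, List.getElem_append_cons_cons_shift l₁ l₂ n x y hjp]
      exact hS

theorem split_three_general {V : Type} [Fintype V] (G : SimpleGraph V) (a : List ℕ)
    (i : Fin a.length) (hi : 3 ≤ a.get i)
    (h : VArrows G a) :
    VArrows G (a.take i ++ [2, a.get i - 1] ++ a.drop (i + 1)) := by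
  have hsplit : a.take i ++ a.get i :: a.drop (i + 1) = a := by
    rw [List.get_eq_getElem, List.getElem_cons_drop, List.take_append_drop]
  rw [← hsplit] at h
  rw [List.append_assoc]
  exact VArrows.split _ _ (by omega : 2 + (a.get i - 1) ≤ a.get i + 1) h

theorem split_three {V : Type} [Fintype V] (G : SimpleGraph V) (a : List ℕ)
    (ha : ∀ x ∈ a, 0 < x) (i : Fin a.length) (hi : 3 ≤ a.get i)
    (h : VArrows G a) :
    VArrows G (a.take i ++ [2, a.get i - 1] ++ a.drop (i + 1)) :=
  split_three_general G a i hi h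
end

section
/- If G →v (a_1, ..., a_s) and k is a positive integer with a_i ≥ k, then G →v (a_1, ..., a_{i-1}, k, a_i - k + 1, a_{i+1}, ..., a_s). -/
/-!
Merge the two new colours `i` and `i + 1` back into the single colour `i`. The old arrowing
property yields a monochromatic clique of size `a_i` inside the merged class (or of the right size
in an untouched class), and by pigeonhole an `a_i`-clique split into two colours contains a
`k`-clique of the first or an `(a_i - k + 1)`-clique of the second, since
`(k - 1) + (a_i - k) < a_i`. More generally, any merging of colours works as long as the merged
demands satisfy the pigeonhole bound.
-/

open SimpleGraph Finset

/-- Pigeonhole with a separate capacity `w y` for each hole: `∑ (w y - 1) < #s` without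
truncated subtraction. -/
theorem Finset.exists_le_card_fiber_of_sum_lt_card_add_card {α β : Type*} [DecidableEq β]
    {s : Finset α} {t : Finset β} {f : α → β} (hf : ∀ x ∈ s, f x ∈ t) {w : β → ℕ}
    (hw : ∑ y ∈ t, w y < #s + #t) : ∃ y ∈ t, w y ≤ #{x ∈ s | f x = y} := by
  by_contra! hlt
  have : #s + #t ≤ ∑ y ∈ t, w y := calc
    #s + #t = ∑ y ∈ t, (#{x ∈ s | f x = y} + 1) := by
      rw [sum_add_distrib, card_eq_sum_card_fiberwise hf, sum_const, smul_eq_mul, mul_one]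
    _ ≤ ∑ y ∈ t, w y := sum_le_sum hlt
  omega

theorem VArrows.of_sum_fiber_lt {V : Type} [Fintype V] {G : SimpleGraph V} {a b : List ℕ}
    (h : VArrows G a) (f : Fin b.length → Fin a.length)
    (hf : ∀ j, ∑ l with f l = j, b.get l < a.get j + #{l | f l = j}) : VArrows G b := by
  classical
  intro c
  obtain ⟨j, S, hSj, hS⟩ := h (f ∘ c)
  obtain ⟨l, -, hl⟩ := exists_le_card_fiber_of_sum_lt_card_add_card
    (t := {l | f l = j}) (f := c) (by simpa using hSj) (by rw [hS.card_eq]; exact hf j)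
  obtain ⟨T, hTS, hT⟩ := exists_subset_card_eq hl
  exact ⟨l, T, fun v hv => (mem_filter.1 (hTS hv)).2,
    ⟨hS.isClique.subset fun v hv => (mem_filter.1 (hTS hv)).1, hT⟩⟩

namespace List

variable {α : Type*} {a : List α} {i : ℕ} {x y : α}

def replaceByPair (a : List α) (i : ℕ) (x y : α) : List α := a.take i ++ [x, y] ++ a.drop (i + 1)

theorem length_replaceByPair (hi : i < a.length) :
    (a.replaceByPair i x y).length = a.length + 1 := by
  simp only [replaceByPair, length_append, length_take, length_cons, length_nil, length_drop]
  omega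

theorem getElem?_replaceByPair (hi : i < a.length) (l : ℕ) :
    (a.replaceByPair i x y)[l]? =
      if l < i then a[l]? else if l = i then some x else if l = i + 1 then some y else a[l - 1]? := by
  have hmin : min i a.length = i := min_eq_left hi.le
  simp only [replaceByPair, getElem?_append, getElem?_take, getElem?_drop, length_append,
    length_take, length_cons, length_nil, hmin]
  split_ifs <;> first | omega | (congr 1; omega) | simp_all

def replaceByPairSource (i : Fin a.length) (x y : α) (l : Fin (a.replaceByPair i x y).length) :
    Fin a.length :=
  i.predAbove (l.cast (length_replaceByPair i.2))

theorem val_replaceByPairSource (i : Fin a.length) (l : Fin (a.replaceByPair i x y).length) :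
    (replaceByPairSource i x y l : ℕ) = if (l : ℕ) ≤ i then (l : ℕ) else l - 1 := by
  simp only [replaceByPairSource, Fin.predAbove, Fin.lt_def, Fin.val_castSucc, Fin.val_cast]
  split_ifs <;> simp only [Fin.val_pred, Fin.coe_castPred, Fin.val_cast] <;> omega

theorem sum_fiber_replaceByPairSource_lt {a : List ℕ} {x y : ℕ} (i : Fin a.length)
    (hxy : x + y ≤ a.get i + 1) (j : Fin a.length) :
    ∑ l with replaceByPairSource i x y l = j, (a.replaceByPair i x y).get l <
      a.get j + #{l | replaceByPairSource i x y l = j} := by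
  have hb : (a.replaceByPair i x y).length = a.length + 1 := length_replaceByPair i.2
  have hget := getElem?_replaceByPair (x := x) (y := y) i.2
  by_cases hj : j = i
  · subst hj
    have hfib : ({l | replaceByPairSource j x y l = j} : Finset _) =
        {⟨j, by omega⟩, ⟨j + 1, by omega⟩} := by
      ext l
      simp only [Fin.ext_iff, val_replaceByPairSource, Finset.mem_filter, mem_univ, true_and,
        mem_insert, Finset.mem_singleton]
      split_ifs <;> omega
    have hx : (a.replaceByPair j x y)[(j : ℕ)] = x := by simp [getElem_eq_iff, hget]
    have hy : (a.replaceByPair j x y)[(j : ℕ) + 1] = y := by simp [getElem_eq_iff, hget]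
    rw [hfib, Finset.sum_pair (by simp [Fin.ext_iff]), card_pair (by simp [Fin.ext_iff])]
    simp only [get_eq_getElem, hx, hy] at hxy ⊢
    omega
  · have hj' : (j : ℕ) ≠ i := Fin.val_ne_of_ne hj
    set l₀ : Fin (a.replaceByPair i x y).length :=
      ⟨if (j : ℕ) < i then j else j + 1, by split_ifs <;> omega⟩
    have hfib : ({l | replaceByPairSource i x y l = j} : Finset _) = {l₀} := by
      ext l
      simp only [Fin.ext_iff, val_replaceByPairSource, Finset.mem_filter, mem_univ, true_and,
        Finset.mem_singleton, l₀]
      split_ifs <;> omega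
    have hl₀ : (a.replaceByPair i x y)[(l₀ : ℕ)] = a[j] := by
      rw [getElem_eq_iff, hget]
      simp only [l₀]
      split_ifs <;> first | omega | simp_all
    rw [hfib, Finset.sum_singleton, card_singleton, get_eq_getElem, hl₀]
    simp

end List

theorem split_k_general {V : Type} [Fintype V] (G : SimpleGraph V) (a : List ℕ) (k : ℕ)
    (i : Fin a.length) (hik : k ≤ a.get i)
    (h : VArrows G a) :
    VArrows G (a.take i ++ [k, a.get i - k + 1] ++ a.drop (i + 1)) :=
  h.of_sum_fiber_lt (List.replaceByPairSource i _ _)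
    (List.sum_fiber_replaceByPairSource_lt i (by omega))

theorem split_k {V : Type} [Fintype V] (G : SimpleGraph V) (a : List ℕ) (k : ℕ)
    (ha : ∀ x ∈ a, 0 < x) (hk : 0 < k) (i : Fin a.length) (hik : k ≤ a.get i)
    (h : VArrows G a) :
    VArrows G (a.take i ++ [k, a.get i - k + 1] ++ a.drop (i + 1)) :=
  split_k_general G a k i hik h
end

section
/- If G →v (a_1, ..., a_s) and t is a positive integer, then K_t + G →v (2, 2, ..., 2, a_1, ..., a_s) with t twos, where K_t + G is the join of a complete graph on t vertices with G. -/
open SimpleGraph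

/-- The join of two graphs: all cross edges are present. -/
def joinG {V W : Type} (G : SimpleGraph V) (H : SimpleGraph W) : SimpleGraph (V ⊕ W) where
  Adj x y := match x, y with
    | .inl a, .inl b => G.Adj a b
    | .inr a, .inr b => H.Adj a b
    | .inl _, .inr _ => True
    | .inr _, .inl _ => True
  symm := by refine ⟨?_⟩; rintro (a|a) (b|b) h
             · exact h.symm
             · trivial
             · trivial
             · exact h.symm
  loopless := by refine ⟨?_⟩; rintro (a|a) h
                 · exact G.irrefl h
                 · exact H.irrefl h

/-!
If some colour `i < t` contains an edge of `K_t + G`, it contains a `2`-clique. Otherwise each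
small colour occurs at most once on `K_t`, and not at all on `G` if it does occur on `K_t`; so
the small colours missing from `K_t` are exactly as many as the vertices of `K_t` with a large
colour. Matching the two sends every vertex of `G` with a small colour to a vertex of `K_t` with a
large colour, and yields a homomorphism `G →g K_t + G` landing in the large colours. Pulling the
colouring back along it, `G →v (a_1, ..., a_s)` gives a monochromatic clique whose image is the
required clique of `K_t + G`.
-/

theorem SimpleGraph.IsNClique.image_hom {V W : Type} [DecidableEq W] {G : SimpleGraph V}
    {H : SimpleGraph W} (f : G →g H) {n : ℕ} {S : Finset V} (hS : G.IsNClique n S) :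
    H.IsNClique n (S.image f) := by
  have hinj : Set.InjOn f S := fun v hv w hw hvw =>
    by_contra fun hne => (f.map_adj (hS.1 hv hw hne)).ne hvw
  refine ⟨?_, by rw [Finset.card_image_of_injOn hinj, hS.2]⟩
  simp only [Finset.coe_image]
  rintro _ ⟨v, hv, rfl⟩ _ ⟨w, hw, rfl⟩ hne
  exact f.map_adj (hS.1 hv hw fun h => hne (h ▸ rfl))

theorem Fin.exists_perm_val_eq_of_injOn {t : ℕ} (k : Fin t → ℕ)
    (hk : Set.InjOn k {u | k u < t}) :
    ∃ π : Equiv.Perm (Fin t), ∀ u, k u < t → (π u : ℕ) = k u := by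
  obtain ⟨g, hg⟩ := Set.MapsTo.exists_equiv_extend_of_card_eq (t := Finset.range t)
    (by simp) (fun u hu => Finset.mem_range.2 hu) hk
  let e : Finset.range t ≃ Fin t :=
    (Equiv.subtypeEquivRight fun _ => Finset.mem_range).trans Fin.equivSubtype.symm
  refine ⟨g.trans e, fun u hu => ?_⟩
  simpa [e] using hg u hu

theorem exists_hom_joinG_top_to_large_colors {V : Type} (G : SimpleGraph V) {t : ℕ}
    (c : Fin t ⊕ V → ℕ)
    (hc : ∀ x y, (joinG (⊤ : SimpleGraph (Fin t)) G).Adj x y → c x = c y → t ≤ c x) :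
    ∃ f : G →g joinG (⊤ : SimpleGraph (Fin t)) G, ∀ v, t ≤ c (f v) := by
  classical
  obtain ⟨π, hπ⟩ := Fin.exists_perm_val_eq_of_injOn (c ∘ Sum.inl) fun u hu u' _ huu' =>
    by_contra fun hne => absurd (hc (.inl u) (.inl u') hne huu') (not_le.2 hu)
  let f : V → Fin t ⊕ V := fun v =>
    if h : c (.inr v) < t then .inl (π.symm ⟨c (.inr v), h⟩) else .inr v
  have hf : ∀ v, t ≤ c (f v) := by
    intro v
    by_cases h : c (.inr v) < t
    · simp only [f, dif_pos h]
      by_contra! hlt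
      have hcol : c (.inl (π.symm ⟨c (.inr v), h⟩)) = c (.inr v) := by
        simpa using (hπ _ hlt).symm
      exact absurd (hc _ _ (by trivial) hcol) (not_le.2 hlt)
    · simpa [f, h] using not_lt.1 h
  refine ⟨⟨f, fun {v w} hvw => ?_⟩, hf⟩
  by_cases hv : c (.inr v) < t <;> by_cases hw : c (.inr w) < t <;>
    simp only [f, dif_pos, dif_neg, hv, hw, not_false_eq_true]
  · show π.symm _ ≠ π.symm _
    simpa using fun hcol => absurd (hc (.inr v) (.inr w) hvw hcol) (not_le.2 hv)
  · trivial
  · trivial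
  · exact hvw

theorem join_t_general {V : Type} [Fintype V] (G : SimpleGraph V) (a : List ℕ) (t : ℕ)
    (h : VArrows G a) :
    VArrows (joinG (⊤ : SimpleGraph (Fin t)) G) (List.replicate t 2 ++ a) := by
  classical
  intro c
  by_cases hsmall_edge :
      ∃ x y, (joinG (⊤ : SimpleGraph (Fin t)) G).Adj x y ∧ c x = c y ∧ (c x : ℕ) < t
  · obtain ⟨x, y, hxy, hcol, hsmall⟩ := hsmall_edge
    refine ⟨c x, {x, y}, by simp [hcol], ?_⟩
    rw [isNClique_iff, Finset.coe_pair, isClique_pair, Finset.card_pair hxy.ne]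
    simp [hxy, List.getElem_append_left, hsmall]
  push Not at hsmall_edge
  obtain ⟨f, hf⟩ := exists_hom_joinG_top_to_large_colors G (fun x => c x)
    fun x y hxy hcol => hsmall_edge x y hxy (Fin.ext hcol)
  have hlen (v : V) : (c (f v) : ℕ) - t < a.length := by
    have hlt := (c (f v)).isLt
    simp only [List.length_append, List.length_replicate] at hlt
    have := hf v
    omega
  obtain ⟨k, S, hSk, hS⟩ := h fun v => ⟨c (f v) - t, hlen v⟩
  refine ⟨⟨t + k, by simp⟩, S.image f, ?_, ?_⟩
  · simp only [Finset.mem_image, forall_exists_index, and_imp, forall_apply_eq_imp_iff₂]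
    intro v hv
    have hk : (c (f v) : ℕ) - t = k := congrArg Fin.val (hSk v hv)
    have := hf v
    ext
    simp only
    omega
  · simpa [List.getElem_append_right] using hS.image_hom f

theorem join_t {V : Type} [Fintype V] (G : SimpleGraph V) (a : List ℕ) (t : ℕ)
    (ha : ∀ x ∈ a, 0 < x) (ht : 0 < t) (h : VArrows G a) :
    VArrows (joinG (⊤ : SimpleGraph (Fin t)) G) (List.replicate t 2 ++ a) :=
  join_t_general G a t h
end

section
/- Let p ≥ 2 be an integer and let b_1, ..., b_s be positive integers with Σ_{i=1}^s (b_i - 1) + 1 = p + 1 and max{b_1,...,b_s} ≤ p. Then the complement of the cycle C_{2p+1} satisfies complement(C_{2p+1}) →v (b_1, ..., b_s). -/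
/-!
An independent set of the cycle `C_n` is a clique of its complement. Every set `S` of at least
`2b - 1` vertices of `C_n` with `2b ≤ n` contains `b` pairwise non-consecutive vertices, so a colour
class of `C_{2p+1}ᶜ` without a `b_i`-clique has at most `2(b_i - 1)` vertices. These bounds add up to
`2 ∑ (b_i - 1) = 2p < 2p + 1`, so some colour class is too large.
-/

open SimpleGraph

/-- The cycle on `n` vertices. -/
def cycleC (n : ℕ) : SimpleGraph (Fin n) :=
  SimpleGraph.fromRel (fun i j => (i.val + 1) % n = j.val)

open Finset

theorem vArrows_of_forall_lt_card {V : Type} [Fintype V] (G : SimpleGraph V) (a : List ℕ)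
    (f : ℕ → ℕ) (hf : ∀ x ∈ a, ∀ S : Finset V, f x < #S → ∃ T ⊆ S, G.IsNClique x T)
    (hcard : (a.map f).sum < Fintype.card V) : VArrows G a := by
  classical
  intro c
  have hfibers : ∑ i, f (a.get i) < ∑ i, #{v | c v = i} := by
    rw [← card_eq_sum_card_fiberwise (fun v _ => mem_coe.2 (mem_univ (c v))), card_univ]
    simpa [List.get_eq_getElem, Fin.sum_univ_fun_getElem] using hcard
  obtain ⟨i, -, hi⟩ := exists_lt_of_sum_lt hfibers
  obtain ⟨T, hTS, hT⟩ := hf _ (a.get_mem i) _ hi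
  exact ⟨i, T, fun v hv => (mem_filter.1 (hTS hv)).2, hT⟩

namespace cycleC

variable {n : ℕ}

theorem exists_isNClique_compl {b : ℕ} (hb : 2 * b ≤ n) : ∃ T, (cycleC n)ᶜ.IsNClique b T := by
  let evens : Fin b ↪ Fin n :=
    ⟨fun k => ⟨2 * k, by omega⟩, fun i j h => by simpa [Fin.ext_iff] using h⟩
  have hevens (k : Fin b) : (evens k : ℕ) = 2 * k := rfl
  refine ⟨univ.map evens, ?_, by simp⟩
  intro x hx y hy hxy
  simp only [coe_map, coe_univ, Set.image_univ, Set.mem_range] at hx hy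
  obtain ⟨i, rfl⟩ := hx
  obtain ⟨j, rfl⟩ := hy
  refine (compl_adj _ _ _).2 ⟨hxy, ?_⟩
  simp only [cycleC, fromRel_adj, hevens]
  rw [Nat.mod_eq_of_lt (by omega), Nat.mod_eq_of_lt (by omega)]
  omega

variable [NeZero n]

theorem adj_iff {u v : Fin n} : (cycleC n).Adj u v ↔ u ≠ v ∧ (u + 1 = v ∨ v + 1 = u) := by
  simp only [cycleC, fromRel_adj, Fin.ext_iff, Fin.val_add, Fin.val_one', Nat.add_mod_mod]

open Fin.NatCast in
theorem eq_univ_of_add_one_mem {S : Finset (Fin n)} (hS : S.Nonempty)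
    (h : ∀ v ∈ S, v + 1 ∈ S) : S = univ := by
  obtain ⟨v, hv⟩ := hS
  have hshift : ∀ k : ℕ, v + (k : Fin n) ∈ S := by
    intro k
    induction k with
    | zero => simpa using hv
    | succ k ih => simpa [Nat.cast_succ, add_assoc] using h _ ih
  refine eq_univ_of_forall fun w => ?_
  simpa using hshift (w - v).val

/-- If `S` is closed under `· + 1` it is all of `Fin n` and the even vertices work; otherwise
some `v ∈ S` has `v + 1 ∉ S`, and `v` extends any solution inside `S \ {v, v - 1}`. -/
theorem exists_subset_isNClique_compl {b : ℕ} (hb : 2 * b ≤ n) {S : Finset (Fin n)}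
    (hS : 2 * b ≤ #S + 1) : ∃ T ⊆ S, (cycleC n)ᶜ.IsNClique b T := by
  induction b generalizing S with
  | zero => exact ⟨∅, empty_subset S, by simp⟩
  | succ b ih =>
    by_cases hclosed : ∀ v ∈ S, v + 1 ∈ S
    · obtain rfl := eq_univ_of_add_one_mem (card_pos.1 (by omega)) hclosed
      obtain ⟨T, hT⟩ := exists_isNClique_compl hb
      exact ⟨T, subset_univ T, hT⟩
    push Not at hclosed
    obtain ⟨v, hv, hv1⟩ := hclosed
    have hcard : 2 * b ≤ #(S \ {v, v - 1}) + 1 := by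
      have := le_card_sdiff {v, v - 1} S
      have := card_le_two (a := v) (b := v - 1)
      omega
    obtain ⟨T, hTS, hT⟩ := ih (by omega) hcard
    refine ⟨insert v T, insert_subset hv (hTS.trans sdiff_subset), hT.insert fun u hu => ?_⟩
    obtain ⟨huS, hu⟩ := mem_sdiff.1 (hTS hu)
    simp only [mem_insert, mem_singleton, not_or] at hu
    rw [compl_adj, adj_iff]
    refine ⟨Ne.symm hu.1, fun ⟨_, h⟩ => h.elim (fun h => hv1 (h ▸ huS)) fun h => ?_⟩
    exact hu.2 (eq_sub_of_add_eq h)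

end cycleC

theorem complement_cycle_arrows_general (p : ℕ) (b : List ℕ)
    (hsum : (b.map (· - 1)).sum + 1 = p + 1)
    (hmax : ∀ x ∈ b, x ≤ p) :
    VArrows ((cycleC (2 * p + 1))ᶜ) b := by
  refine vArrows_of_forall_lt_card _ b (fun x => 2 * (x - 1)) (fun x hx S hS => ?_) ?_
  · exact cycleC.exists_subset_isNClique_compl (by linarith [hmax x hx]) (by omega)
  · rw [List.sum_map_mul_left, Fintype.card_fin]
    omega

theorem complement_cycle_arrows (p : ℕ) (hp : 2 ≤ p) (b : List ℕ) (hne : b ≠ [])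
    (hb : ∀ x ∈ b, 0 < x) (hsum : (b.map (· - 1)).sum + 1 = p + 1)
    (hmax : ∀ x ∈ b, x ≤ p) :
    VArrows ((cycleC (2 * p + 1))ᶜ) b :=
  complement_cycle_arrows_general p b hsum hmax
end

section
/- For positive integers a_1,...,a_s with m = Σ(a_i − 1) + 1 and p = max{a_1,...,a_s}, and any q > p: every graph G with G →v (a_1,...,a_s) also satisfies G →v (2_{m−p}, p), i.e. the arrowing relation with m − p twos followed by p; consequently F_v(2_{m−p}, p; q) ≤ F_v(a_1,...,a_s; q). -/
open SimpleGraph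

/-- The vertex Folkman number `F_v(a; q)`. -/
noncomputable def Fv (a : List ℕ) (q : ℕ) : ℕ :=
  sInf {n : ℕ | ∃ G : SimpleGraph (Fin n), VArrows G a ∧ G.CliqueFree q}

/-! Merging colour classes: if each colour `i` of `a` absorbs a group of colours of `b` whose
excesses `b_k - 1` sum to less than `a_i`, then a monochromatic `a_i`-clique of the coarse colouring
contains, by pigeonhole, a monochromatic `b_k`-clique. Giving `p` its own colour and splitting every
other `a_i` into `a_i - 1` colours of weight 2 turns `a` into `(2, …, 2, p)`.

Since `Fv` is an infimum over `ℕ` (and `sInf ∅ = 0`), the inequality of Folkman numbers also needs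
a graph with `ω < q` that arrows `a`. Take the `p`-subsets of `{0, …, N - 1}`, with `A` adjacent to
`B` when the least element of one lies in the other without being its least element. In a clique,
the least elements of all members lie in the member whose least element is smallest, so there are
at most `p` members. By Ramsey's theorem for `p`-sets, any colouring has a `(2p - 1)`-set all of
whose `p`-subsets share a colour, and its `p` windows of `p` consecutive elements form a
monochromatic `p`-clique. -/

open Finset

theorem exists_fiber_card_eq {ι : Type*} [Fintype ι] [DecidableEq ι] (w : ι → ℕ) :
    ∃ g : Fin (∑ i, w i) → ι, ∀ i, #{k | g k = i} = w i := by
  let e : Fin (∑ i, w i) ≃ Σ i, Fin (w i) := (Fintype.equivFinOfCardEq (by simp)).symm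
  refine ⟨fun k => (e k).1, fun i => ?_⟩
  rw [← Fintype.card_subtype,
    Fintype.card_congr (e.subtypeEquivOfSubtype.trans (Equiv.sigmaSubtype i))]
  simp

namespace VArrows

variable {V : Type} [Fintype V] {G : SimpleGraph V}

theorem of_fiberwise {a b : List ℕ} (h : VArrows G a) (f : Fin b.length → Fin a.length)
    (hf : ∀ i, ∑ k with f k = i, (b.get k - 1) < a.get i) : VArrows G b := by
  intro c
  obtain ⟨i, S, hSi, hS⟩ := h (f ∘ c)
  have hsum : ∑ k with f k = i, (b.get k - 1) < ∑ k with f k = i, #{v ∈ S | c v = k} := by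
    rw [← card_eq_sum_card_fiberwise (fun v hv => by simpa using hSi v hv), hS.card_eq]
    exact hf i
  obtain ⟨k, -, hk⟩ := exists_lt_of_sum_lt hsum
  obtain ⟨T, hTS, hT⟩ := exists_subset_card_eq (show b.get k ≤ #{v ∈ S | c v = k} by omega)
  exact ⟨k, T, fun v hv => (mem_filter.1 (hTS hv)).2,
    hS.isClique.subset (by simpa using hTS.trans (filter_subset _ S)), hT⟩

theorem replicate_two_append {a : List ℕ} {n x : ℕ} (h : VArrows G a)
    (g : Fin n → Fin a.length) (i₀ : Fin a.length)
    (hg : ∀ i, #{k | g k = i} + (if i = i₀ then x - 1 else 0) < a.get i) :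
    VArrows G (List.replicate n 2 ++ [x]) := by
  have hlen : (List.replicate n 2 ++ [x]).length = n + 1 := by simp
  refine h.of_fiberwise (fun k => Fin.lastCases i₀ g (Fin.cast hlen k)) fun i => ?_
  convert hg i using 1
  rw [sum_filter, ← (finCongr hlen).symm.sum_comp, Fin.sum_univ_castSucc]
  simp [eq_comm (a := i₀)]

theorem replicate_two_append_of_mem {a : List ℕ} {p : ℕ} (h : VArrows G a) (hp : p ∈ a)
    (ha : ∀ x ∈ a, 1 ≤ x) :
    VArrows G (List.replicate ((a.map (· - 1)).sum + 1 - p) 2 ++ [p]) := by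
  obtain ⟨i₀, rfl⟩ := List.get_of_mem hp
  let w : Fin a.length → ℕ := Function.update (fun i => a.get i - 1) i₀ 0
  obtain ⟨g, hg⟩ := exists_fiber_card_eq w
  have hw : ∑ i, w i + (a.get i₀ - 1) = (a.map (· - 1)).sum := by
    rw [← Fin.sum_univ_fun_getElem, sum_update_of_mem (mem_univ i₀),
      ← add_sum_erase _ _ (mem_univ i₀), sdiff_singleton_eq_erase]
    simp [add_comm]
  rw [show (a.map (· - 1)).sum + 1 - a.get i₀ = ∑ i, w i by have := ha _ hp; omega]
  refine h.replicate_two_append g i₀ fun i => ?_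
  have := ha _ (List.getElem_mem i.2)
  rw [hg]
  rcases eq_or_ne i i₀ with rfl | hi
  · simp [w]
    omega
  · simp [w, hi]
    omega

theorem map {W : Type} [Fintype W] {H : SimpleGraph W} {a : List ℕ} (h : VArrows G a)
    (f : G ↪g H) : VArrows H a := by
  intro c
  obtain ⟨i, S, hSi, hS⟩ := h (c ∘ f)
  refine ⟨i, S.map f.toEmbedding, by simpa using hSi, hS.map.mono ?_⟩
  rw [map_le_iff_le_comap]
  exact fun _ _ => f.map_adj_iff.2

end VArrows

section Leads

variable {α β : Type*} [LinearOrder α] [LinearOrder β] {A B : Finset α}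

def Leads (A B : Finset α) : Prop :=
  ∃ b ∈ A, IsLeast (B : Set α) b ∧ ¬IsLeast (A : Set α) b

theorem Finset.min_eq_of_isLeast {b : α} (h : IsLeast (B : Set α) b) : B.min = b :=
  le_antisymm (min_le h.1) (Finset.le_min fun _ hx => WithTop.coe_le_coe.2 (h.2 hx))

namespace Leads

theorem ne (h : Leads A B) : A ≠ B := by
  rintro rfl
  obtain ⟨b, -, hb, hnb⟩ := h
  exact hnb hb

theorem min_lt (h : Leads A B) : A.min < B.min := by
  obtain ⟨b, hbA, hb, hnb⟩ := h
  obtain ⟨a, haA, hab⟩ : ∃ a ∈ A, a < b := by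
    simpa [IsLeast, hbA, lowerBounds] using hnb
  rw [min_eq_of_isLeast hb]
  exact (min_le haA).trans_lt (WithTop.coe_lt_coe.2 hab)

theorem min_mem_image (h : Leads A B) : B.min ∈ A.image (↑) := by
  obtain ⟨b, hbA, hb, -⟩ := h
  exact mem_image.2 ⟨b, hbA, (min_eq_of_isLeast hb).symm⟩

theorem map (h : Leads A B) (e : α ↪o β) :
    Leads (A.map e.toEmbedding) (B.map e.toEmbedding) := by
  obtain ⟨b, hbA, hb, hnb⟩ := h
  refine ⟨e b, mem_map_of_mem _ hbA, ?_, ?_⟩ <;>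
    simpa only [coe_map, RelEmbedding.coe_toEmbedding, e.strictMono.map_isLeast]

end Leads

theorem leads_Icc [LocallyFiniteOrder α] {a b c d : α} (hac : a < c) (hcb : c ≤ b)
    (hcd : c ≤ d) : Leads (Icc a b) (Icc c d) := by
  refine ⟨c, mem_Icc.2 ⟨hac.le, hcb⟩, by simpa using isLeast_Icc hcd, fun h => ?_⟩
  exact (h.2 (mem_Icc.2 ⟨le_rfl, hac.le.trans hcb⟩)).not_gt hac

theorem card_le_of_pairwise_leads {𝒜 : Finset (Finset α)} {p : ℕ} (hp : 0 < p)
    (hcard : ∀ A ∈ 𝒜, #A = p)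
    (h𝒜 : (𝒜 : Set (Finset α)).Pairwise fun A B => Leads A B ∨ Leads B A) : #𝒜 ≤ p := by
  rcases 𝒜.eq_empty_or_nonempty with rfl | hne
  · simp
  obtain ⟨A₀, hA₀, hmin⟩ := exists_min_image 𝒜 Finset.min hne
  have hmaps : ∀ B ∈ 𝒜, B.min ∈ A₀.image (↑) := by
    intro B hB
    rcases eq_or_ne B A₀ with rfl | hBA
    · obtain ⟨b, hb⟩ := min_of_nonempty (card_pos.1 ((hcard B hB).symm ▸ hp))
      exact hb ▸ mem_image_of_mem _ (mem_of_min hb)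
    · rcases h𝒜 hA₀ hB hBA.symm with h | h
      · exact h.min_mem_image
      · exact absurd (hmin B hB) (not_le.2 h.min_lt)
  have hinj : Set.InjOn Finset.min (𝒜 : Set (Finset α)) := by
    intro A hA B hB hAB
    by_contra hne
    rcases h𝒜 hA hB hne with h | h
    · exact h.min_lt.ne hAB
    · exact h.min_lt.ne hAB.symm
  calc #𝒜 ≤ #(A₀.image ((↑) : α → WithTop α)) := card_le_card_of_injOn _ hmaps hinj
    _ ≤ #A₀ := card_image_le
    _ = p := hcard A₀ hA₀

theorem exists_pairwise_leads (M : Finset α) (p : ℕ) (hM : #M = p + (p - 1)) :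
    ∃ 𝒲 ⊆ M.powersetCard p, #𝒲 = p ∧
      (𝒲 : Set (Finset α)).Pairwise fun A B => Leads A B ∨ Leads B A := by
  let e := M.orderEmbOfFin hM
  let W : Fin p → Finset α := fun i =>
    (Icc (Fin.castAdd (p - 1) i) (Fin.addNat i (p - 1))).map e.toEmbedding
  have hlead : ∀ i j, i < j → Leads (W i) (W j) := by
    intro i j hij
    refine (leads_Icc ?_ ?_ ?_).map e <;>
      simp only [Fin.lt_def, Fin.le_def, Fin.val_castAdd, Fin.val_addNat] at hij ⊢ <;> omega
  have hcomp : ∀ i j, i ≠ j → Leads (W i) (W j) ∨ Leads (W j) (W i) := fun i j hij =>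
    (lt_or_gt_of_ne hij).imp (hlead i j) (hlead j i)
  have hinj : Function.Injective W := fun i j hij => by_contra fun hne =>
    (hcomp i j hne).elim (fun h => h.ne hij) (fun h => h.ne hij.symm)
  refine ⟨univ.image W, ?_, by rw [card_image_of_injective _ hinj, card_fin], ?_⟩
  · intro A hA
    obtain ⟨i, -, rfl⟩ := mem_image.1 hA
    refine mem_powersetCard.2 ⟨fun x hx => ?_, ?_⟩
    · obtain ⟨k, -, rfl⟩ := mem_map.1 hx
      exact M.orderEmbOfFin_mem hM k
    · simp [W]
      omega
  · simp only [coe_image, coe_univ, Set.image_univ]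
    rintro _ ⟨i, rfl⟩ _ ⟨j, rfl⟩ hne
    exact hcomp i j (ne_of_apply_ne W hne)

end Leads

section Ramsey

variable {α κ : Type*} [LinearOrder α]

/-- The reservoir `T` holds the candidates for the later elements of `E`. -/
def IsEndHomogeneous (f : Finset α → κ) (p : ℕ) (E T : Finset α) : Prop :=
  ∀ P ⊆ E, #P = p → ∀ a ∈ E ∪ T, ∀ b ∈ E ∪ T, (∀ x ∈ P, x < a) → (∀ x ∈ P, x < b) →
    f (insert a P) = f (insert b P)

namespace IsEndHomogeneous

variable {f : Finset α → κ} {p : ℕ} {E T : Finset α}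

theorem exists_insert [Fintype κ] (h : IsEndHomogeneous f p E T)
    (hET : ∀ x ∈ E, ∀ y ∈ T, x < y) {M : ℕ}
    (hT : Fintype.card κ ^ (#E + 1).choose p * M < #T) :
    ∃ x ∈ T, ∃ T' ⊆ T, (∀ y ∈ T', x < y) ∧ M ≤ #T' ∧ IsEndHomogeneous f p (insert x E) T' := by
  classical
  have hTne : T.Nonempty := card_pos.1 (by omega)
  set x := T.min' hTne
  have hxT : x ∈ T := T.min'_mem hTne
  have hEx : ∀ y ∈ E, y < x := fun y hy => hET y hy x hxT
  have hxE : x ∉ E := fun hx => lt_irrefl x (hEx x hx)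
  have : Nonempty κ := ⟨f ∅⟩
  -- sort the rest of `T` by the colours its elements give to the `p`-subsets of `insert x E`
  let χ : α → (powersetCard p (insert x E) → κ) := fun y Q => f (insert y Q)
  obtain ⟨φ, -, hφ⟩ := exists_le_card_fiber_of_mul_le_card_of_maps_to (s := T.erase x)
    (f := χ) (n := M) (fun _ _ => mem_univ _) univ_nonempty (by
      rw [card_univ, Fintype.card_fun, Fintype.card_coe, card_powersetCard,
        card_insert_of_notMem hxE, card_erase_of_mem hxT]
      omega)
  refine ⟨x, hxT, _, (filter_subset _ _).trans (erase_subset _ _), fun y hy => ?_, hφ, ?_⟩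
  · obtain ⟨hyx, hyT⟩ := mem_erase.1 (mem_filter.1 hy).1
    exact lt_of_le_of_ne (T.min'_le y hyT) hyx.symm
  intro P hP hPc a ha b hb hPa hPb
  by_cases hxP : x ∈ P
  · have hfib : ∀ z ∈ insert x E ∪ {y ∈ T.erase x | χ y = φ}, x < z → χ z = φ := by
      intro z hz hxz
      rcases mem_union.1 hz with hz | hz
      · rcases mem_insert.1 hz with rfl | hz
        · exact absurd hxz (lt_irrefl _)
        · exact absurd (hEx z hz) hxz.not_gt
      · exact (mem_filter.1 hz).2
    exact congrFun ((hfib a ha (hPa x hxP)).trans (hfib b hb (hPb x hxP)).symm)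
      ⟨P, mem_powersetCard.2 ⟨hP, hPc⟩⟩
  · have hPE : P ⊆ E := fun z hz =>
      (mem_insert.1 (hP hz)).resolve_left fun hzx => hxP (hzx ▸ hz)
    have hsub : insert x E ∪ {y ∈ T.erase x | χ y = φ} ⊆ E ∪ T :=
      union_subset (insert_subset (mem_union_right _ hxT) subset_union_left)
        (((filter_subset _ _).trans (erase_subset _ _)).trans subset_union_right)
    exact h P hPE hPc a (hsub ha) b (hsub hb) hPa hPb

theorem apply_eq (h : IsEndHomogeneous f p E T) (hET : ∀ x ∈ E, ∀ y ∈ T, x < y)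
    {A : Finset α} (hAE : A ⊆ E) (hA : A.Nonempty) (hAc : #A = p + 1) {e : α} (he : e ∈ T) :
    f A = f (insert e (A.erase (A.max' hA))) := by
  have hmax := A.max'_mem hA
  conv_lhs => rw [← insert_erase hmax]
  exact h _ ((erase_subset _ _).trans hAE) (by rw [card_erase_of_mem hmax, hAc]; rfl) _
    (mem_union_left _ (hAE hmax)) _ (mem_union_right _ he)
    (fun _ hx => A.lt_max'_of_mem_erase_max' hA hx)
    (fun x hx => hET x (hAE (mem_of_mem_erase hx)) e he)

end IsEndHomogeneous

theorem exists_isEndHomogeneous [Fintype κ] (p t M : ℕ) :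
    ∃ N, ∀ (f : Finset α → κ) (S : Finset α), N ≤ #S → ∃ E ⊆ S, ∃ T ⊆ S,
      (∀ x ∈ E, ∀ y ∈ T, x < y) ∧ #E = t ∧ M ≤ #T ∧ IsEndHomogeneous f p E T := by
  classical
  induction t generalizing M with
  | zero =>
    refine ⟨Fintype.card κ * M, fun f S hS => ?_⟩
    have : Nonempty κ := ⟨f ∅⟩
    obtain ⟨c, -, hc⟩ := exists_le_card_fiber_of_mul_le_card_of_maps_to (s := S)
      (f := fun y => f {y}) (fun _ _ => mem_univ _) univ_nonempty (by rwa [card_univ])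
    refine ⟨∅, empty_subset _, _, filter_subset _ _, by simp, rfl, hc, ?_⟩
    intro P hP _ a ha b hb _ _
    obtain rfl := subset_empty.1 hP
    rw [empty_union] at ha hb
    exact (mem_filter.1 ha).2.trans (mem_filter.1 hb).2.symm
  | succ t ih =>
    obtain ⟨N, hN⟩ := ih (Fintype.card κ ^ (t + 1).choose p * M + 1)
    refine ⟨N, fun f S hS => ?_⟩
    obtain ⟨E, hES, T, hTS, hET, rfl, hT, hE⟩ := hN f S hS
    obtain ⟨x, hxT, T', hT'T, hxT', hT', hE'⟩ := hE.exists_insert hET (M := M) (by omega)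
    refine ⟨insert x E, insert_subset (hTS hxT) hES, T', hT'T.trans hTS, ?_,
      card_insert_of_notMem fun hx => lt_irrefl x (hET x hx x hxT), hT', hE'⟩
    intro z hz y hy
    rcases mem_insert.1 hz with rfl | hz
    · exact hxT' y hy
    · exact hET z hz y (hT'T hy)

theorem exists_homogeneous [Fintype κ] (p k : ℕ) :
    ∃ N, ∀ (f : Finset α → κ) (S : Finset α), N ≤ #S →
      ∃ M ⊆ S, #M = k ∧ ∃ c, ∀ A ∈ M.powersetCard p, f A = c := by
  induction p with
  | zero =>
    refine ⟨k, fun f S hS => ?_⟩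
    obtain ⟨M, hMS, hM⟩ := exists_subset_card_eq hS
    exact ⟨M, hMS, hM, f ∅, fun A hA => by rw [card_eq_zero.1 (mem_powersetCard.1 hA).2]⟩
  | succ p ih =>
    obtain ⟨N₀, h₀⟩ := ih
    obtain ⟨N, hN⟩ := exists_isEndHomogeneous (α := α) (κ := κ) p N₀ 1
    refine ⟨N, fun f S hS => ?_⟩
    obtain ⟨E, hES, T, -, hET, hE, hT, hhom⟩ := hN f S hS
    obtain ⟨e, he⟩ := card_pos.1 hT
    -- colour a `p`-set by the colour it gets together with any element `e` beyond `E`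
    obtain ⟨M, hME, hM, c, hc⟩ := h₀ (fun P => f (insert e P)) E hE.ge
    refine ⟨M, hME.trans hES, hM, c, fun A hA => ?_⟩
    obtain ⟨hAM, hAc⟩ := mem_powersetCard.1 hA
    have hAne : A.Nonempty := card_pos.1 (by omega)
    rw [hhom.apply_eq hET (hAM.trans hME) hAne hAc he]
    exact hc _ (mem_powersetCard.2 ⟨(erase_subset _ _).trans hAM,
      by rw [card_erase_of_mem (A.max'_mem hAne), hAc]; rfl⟩)

end Ramsey

section LeadsGraph

variable {α : Type*} [LinearOrder α]

def leadsGraph (S : Finset α) (p : ℕ) : SimpleGraph (S.powersetCard p) :=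
  SimpleGraph.fromRel fun A B => Leads A.1 B.1

theorem leadsGraph_cliqueFree (S : Finset α) {p : ℕ} (hp : 0 < p) :
    (leadsGraph S p).CliqueFree (p + 1) := by
  intro T hT
  have hle : #(T.map (Function.Embedding.subtype _)) ≤ p := by
    refine card_le_of_pairwise_leads hp ?_ ?_
    · simp only [mem_map, Function.Embedding.coe_subtype]
      rintro _ ⟨A, -, rfl⟩
      exact (mem_powersetCard.1 A.2).2
    · simp only [coe_map, Function.Embedding.coe_subtype]
      rintro _ ⟨A, hA, rfl⟩ _ ⟨B, hB, rfl⟩ hAB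
      exact (hT.isClique hA hB fun h => hAB (congrArg _ h)).2
  rw [card_map, hT.card_eq] at hle
  omega

theorem leadsGraph_arrows (κ : Type*) [Fintype κ] [Nonempty κ] (p : ℕ) :
    ∃ N, ∀ S : Finset α, N ≤ #S → ∀ c : S.powersetCard p → κ,
      ∃ T, (leadsGraph S p).IsNClique p T ∧ ∃ k, ∀ A ∈ T, c A = k := by
  classical
  obtain ⟨N, hN⟩ := exists_homogeneous (α := α) (κ := κ) p (p + (p - 1))
  refine ⟨N, fun S hS c => ?_⟩
  let f : Finset α → κ := fun A =>
    if h : A ∈ S.powersetCard p then c ⟨A, h⟩ else Classical.arbitrary κ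
  obtain ⟨M, hMS, hM, k, hk⟩ := hN f S hS
  obtain ⟨𝒲, h𝒲M, h𝒲, hpair⟩ := exists_pairwise_leads M p hM
  have h𝒲S : 𝒲 ⊆ S.powersetCard p := h𝒲M.trans (powersetCard_mono hMS)
  refine ⟨𝒲.subtype (· ∈ S.powersetCard p), ⟨?_, ?_⟩, k, fun A hA => ?_⟩
  · intro A hA B hB hAB
    exact ⟨hAB, hpair (mem_subtype.1 hA) (mem_subtype.1 hB) (Subtype.coe_ne_coe.2 hAB)⟩
  · rw [card_subtype, filter_true_of_mem h𝒲S, h𝒲]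
  · rw [← hk A (h𝒲M (mem_subtype.1 hA))]
    simp only [f, dif_pos A.2]

end LeadsGraph

theorem exists_varrows_cliqueFree {a : List ℕ} (ha : a ≠ []) {p : ℕ} (hp : 0 < p)
    (hmax : ∀ x ∈ a, x ≤ p) :
    ∃ n, ∃ G : SimpleGraph (Fin n), VArrows G a ∧ G.CliqueFree (p + 1) := by
  have : Nonempty (Fin a.length) := ⟨⟨0, List.length_pos_iff.2 ha⟩⟩
  obtain ⟨N, hN⟩ := leadsGraph_arrows (α := ℕ) (Fin a.length) p
  let G := leadsGraph (range N) p
  have hG : VArrows G a := fun c => by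
    obtain ⟨T, hT, i, hi⟩ := hN (range N) (by simp) c
    obtain ⟨T', hT'T, hT'⟩ :=
      exists_subset_card_eq ((hmax _ (List.get_mem a i)).trans hT.card_eq.ge)
    exact ⟨i, T', fun v hv => hi v (hT'T hv), hT.isClique.subset (by simpa using hT'T), hT'⟩
  exact ⟨_, G.overFin rfl, hG.map (G.overFinIso rfl).toEmbedding,
    (leadsGraph_cliqueFree _ hp).comap (G.overFinIso rfl).symm.isContained⟩

theorem Fv_le_Fv_of_varrows {a b : List ℕ} {q : ℕ}
    (hab : ∀ n (G : SimpleGraph (Fin n)), VArrows G a → VArrows G b)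
    (ha : ∃ n, ∃ G : SimpleGraph (Fin n), VArrows G a ∧ G.CliqueFree q) : Fv b q ≤ Fv a q := by
  obtain ⟨G, hGa, hGq⟩ := Nat.sInf_mem ha
  exact Nat.sInf_le ⟨G, hab _ G hGa, hGq⟩

theorem reduce_to_twos (a : List ℕ) (m p q : ℕ) (hne : a ≠ [])
    (ha : ∀ x ∈ a, 2 ≤ x) (hmax : ∀ x ∈ a, x ≤ p) (hmem : p ∈ a)
    (hm : m = (a.map (· - 1)).sum + 1) (hq : p < q) :
    (∀ (V : Type) [Fintype V] (G : SimpleGraph V), VArrows G a →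
        VArrows G (List.replicate (m - p) 2 ++ [p])) ∧
    Fv (List.replicate (m - p) 2 ++ [p]) q ≤ Fv a q := by
  have hred : ∀ (V : Type) [Fintype V] (G : SimpleGraph V), VArrows G a →
      VArrows G (List.replicate (m - p) 2 ++ [p]) := fun V _ G hG =>
    hm ▸ hG.replicate_two_append_of_mem hmem fun x hx => one_le_two.trans (ha x hx)
  obtain ⟨n, G, hG, hfree⟩ :=
    exists_varrows_cliqueFree hne (zero_lt_two.trans_le (ha p hmem)) hmax
  exact ⟨hred, Fv_le_Fv_of_varrows (fun _ G => hred _ G) ⟨n, G, hG, hfree.mono hq⟩⟩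
end

section
/- For integers 2 ≤ s ≤ r and p ≥ 2 such that the Folkman numbers exist, F_v(2_r, p; r + p − 1) ≤ F_v(2_s, p; s + p − 1) + r − s. -/
open SimpleGraph

/-!
If `G →v (2_s, p)` with `ω(G) < s + p - 1`, then `K_{r-s} + G →v (2_r, p)` with
`ω < r + p - 1`. In an `r`-colouring of the join, the vertices of `K_{r-s}` that receive one of the
`r` independent colours receive distinct colours, which no vertex of `G` can then use; so `G` sees
at most `s + h` of these colours, where `h` vertices of `K_{r-s}` avoid them all. Any `s` of them
leave a `p`-clique in `G`, each of the other `h` removes at most one vertex of it, and the `h`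
vertices of `K_{r-s}` make up for the loss.

Since `Fv` is `0` when no graph qualifies, such a `G` must also be shown to exist (Folkman).
Joins of shift graphs (triangle-free, of arbitrarily large chromatic number) give it for even `p`,
with `ω(G) = p`; for odd `p` one factor is a `K₄`-free graph `→v (2_s, 3)` built from a
triangle-free graph of chromatic number larger than `s + 2 ^ s`.
-/

open Finset

variable {V W K : Type}

namespace SimpleGraph

lemma IsClique.card_lt_of_cliqueFree {G : SimpleGraph V} {n : ℕ} {S : Finset V}
    (hS : G.IsClique (S : Set V)) (hG : G.CliqueFree n) : #S < n := by
  by_contra! h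
  obtain ⟨T, hTS, hT⟩ := S.exists_subset_card_eq h
  exact hG T ⟨hS.subset (by simpa using hTS), hT⟩

lemma IsClique.exists_isNClique {G : SimpleGraph V} {n : ℕ} {S : Finset V}
    (hS : G.IsClique (S : Set V)) (h : n ≤ #S) : ∃ T ⊆ S, G.IsNClique n T := by
  obtain ⟨T, hTS, hT⟩ := S.exists_subset_card_eq h
  exact ⟨T, hTS, hS.subset (by simpa using hTS), hT⟩

lemma IsClique.card_filter_mem_le {G : SimpleGraph V} {α : Type} [DecidableEq α] {c : V → α}
    {D : Finset α} (hc : ∀ x y, G.Adj x y → c x = c y → c x ∉ D) {S : Finset V}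
    (hS : G.IsClique (S : Set V)) : #{v ∈ S | c v ∈ D} ≤ #D := by
  refine card_le_card_of_injOn c (fun v hv => (mem_filter.mp hv).2) fun x hx y hy hxy => ?_
  by_contra hne
  simp only [coe_filter, Set.mem_ofPred_eq] at hx hy
  exact hc x y (hS hx.1 hy.1 hne) hxy hx.2

lemma IsClique.toLeft {Γ : SimpleGraph (V ⊕ W)} {G : SimpleGraph V} {S : Finset (V ⊕ W)}
    (hS : Γ.IsClique (S : Set (V ⊕ W))) (hΓ : ∀ x y, Γ.Adj (.inl x) (.inl y) → G.Adj x y) :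
    G.IsClique (S.toLeft : Set V) := fun x hx y hy hne =>
  hΓ x y (hS (mem_toLeft.mp hx) (mem_toLeft.mp hy) (Sum.inl_injective.ne hne))

lemma IsClique.toRight {Γ : SimpleGraph (V ⊕ W)} {H : SimpleGraph W} {S : Finset (V ⊕ W)}
    (hS : Γ.IsClique (S : Set (V ⊕ W))) (hΓ : ∀ x y, Γ.Adj (.inr x) (.inr y) → H.Adj x y) :
    H.IsClique (S.toRight : Set W) := fun x hx y hy hne =>
  hΓ x y (hS (mem_toRight.mp hx) (mem_toRight.mp hy) (Sum.inr_injective.ne hne))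

def join (G : SimpleGraph V) (H : SimpleGraph W) : SimpleGraph (V ⊕ W) :=
  (G ⊕g H) ⊔ completeBipartiteGraph V W

variable {G : SimpleGraph V} {H : SimpleGraph W}

@[simp] lemma join_adj_inl_inl {x y : V} : (join G H).Adj (.inl x) (.inl y) ↔ G.Adj x y := by
  simp [join]

@[simp] lemma join_adj_inr_inr {x y : W} : (join G H).Adj (.inr x) (.inr y) ↔ H.Adj x y := by
  simp [join]

@[simp] lemma join_adj_inl_inr {x : V} {y : W} : (join G H).Adj (.inl x) (.inr y) := by
  simp [join]

@[simp] lemma join_adj_inr_inl {x : W} {y : V} : (join G H).Adj (.inr x) (.inl y) := by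
  simp [join]

lemma isClique_disjSum {S : Finset V} {T : Finset W} (hS : G.IsClique (S : Set V))
    (hT : H.IsClique (T : Set W)) : (join G H).IsClique (S.disjSum T : Set (V ⊕ W)) := by
  rintro (x | x) hx (y | y) hy hne <;>
    simp only [mem_coe, inl_mem_disjSum, inr_mem_disjSum] at hx hy
  · exact join_adj_inl_inl.mpr (hS hx hy (by rintro rfl; exact hne rfl))
  · exact join_adj_inl_inr
  · exact join_adj_inr_inl
  · exact join_adj_inr_inr.mpr (hT hx hy (by rintro rfl; exact hne rfl))

lemma CliqueFree.join {a b : ℕ} (hG : G.CliqueFree (a + 1)) (hH : H.CliqueFree (b + 1)) :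
    (join G H).CliqueFree (a + b + 1) := by
  intro S hS
  have := (hS.1.toLeft fun _ _ => join_adj_inl_inl.mp).card_lt_of_cliqueFree hG
  have := (hS.1.toRight fun _ _ => join_adj_inr_inr.mp).card_lt_of_cliqueFree hH
  have := S.card_toLeft_add_card_toRight
  have := hS.2
  omega

end SimpleGraph

/-- `G →v (2_s, p)`, with the `s` colours of the independent classes taken to be an arbitrary set
`D` of at most `s` colours and all other colours merged into the last one. -/
def VArrowsTwos (G : SimpleGraph V) (s p : ℕ) : Prop :=
  ∀ (α : Type) (c : V → α) (D : Finset α), #D ≤ s →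
    (∀ x y, G.Adj x y → c x = c y → c x ∉ D) →
    ∃ S : Finset V, G.IsClique (S : Set V) ∧ p ≤ #S ∧ ∀ v ∈ S, c v ∉ D

namespace VArrowsTwos

variable {G : SimpleGraph V} {H : SimpleGraph W} {s p : ℕ}

/-- Each of the `m` extra independent classes meets a clique in at most one vertex. -/
lemma add_sub (hG : VArrowsTwos G s p) (m : ℕ) : VArrowsTwos G (s + m) (p - m) := by
  classical
  intro α c D hD hc
  obtain ⟨D₁, hD₁D, hD₁⟩ := D.exists_subset_card_eq (Nat.sub_le #D m)
  obtain ⟨S, hS, hpS, hSD₁⟩ :=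
    hG α c D₁ (by omega) fun x y hxy hcxy hx => hc x y hxy hcxy (hD₁D hx)
  refine ⟨{v ∈ S | c v ∉ D}, hS.subset (coe_subset.mpr (filter_subset _ S)), ?_,
    fun v hv => (mem_filter.mp hv).2⟩
  have hbad : #{v ∈ S | c v ∈ D \ D₁} ≤ #(D \ D₁) :=
    hS.card_filter_mem_le fun x y hxy hcxy hx => hc x y hxy hcxy (mem_sdiff.mp hx).1
  have hsplit := card_filter_add_card_filter_not (s := S) (fun v => c v ∈ D \ D₁)
  have heq : {v ∈ S | c v ∉ D \ D₁} = {v ∈ S | c v ∉ D} :=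
    filter_congr fun v hv => by simp [hSD₁ v hv]
  rw [heq] at hsplit
  rw [card_sdiff_of_subset hD₁D] at hbad
  omega

lemma join {a b : ℕ} (hG : VArrowsTwos G s a) (hH : VArrowsTwos H s b) :
    VArrowsTwos (G.join H) s (a + b) := by
  intro α c D hD hc
  obtain ⟨S, hS, haS, hSD⟩ :=
    hG α (c ∘ .inl) D hD fun x y hxy => hc _ _ (join_adj_inl_inl.mpr hxy)
  obtain ⟨T, hT, hbT, hTD⟩ :=
    hH α (c ∘ .inr) D hD fun x y hxy => hc _ _ (join_adj_inr_inr.mpr hxy)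
  refine ⟨S.disjSum T, isClique_disjSum hS hT, by rw [card_disjSum]; omega, ?_⟩
  rintro (v | v) hv <;> simp only [inl_mem_disjSum, inr_mem_disjSum] at hv
  exacts [hSD v hv, hTD v hv]

lemma join_top [Fintype K] (hG : VArrowsTwos G s p) :
    VArrowsTwos ((⊤ : SimpleGraph K).join G) (s + Fintype.card K) p := by
  classical
  intro α c D hD hc
  set L : Finset K := {k | c (.inl k) ∈ D}
  set R : Finset K := {k | c (.inl k) ∉ D}
  set C : Finset α := L.image (c ∘ .inl)
  have hCD : C ⊆ D := image_subset_iff.mpr fun k hk => (mem_filter.mp hk).2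
  have hC : #C = #L := card_image_of_injOn fun k hk l hl hkl => by
    by_contra hne
    exact hc _ _ (join_adj_inl_inl.mpr hne) hkl (mem_filter.mp hk).2
  have hLR : #L + #R = Fintype.card K := (card_filter_add_card_filter_not _).trans card_univ
  obtain ⟨S, hS, hpS, hSD⟩ := hG.add_sub #R α (c ∘ .inr) (D \ C)
    (by rw [card_sdiff_of_subset hCD]; omega)
    fun x y hxy hcxy hx => hc _ _ (join_adj_inr_inr.mpr hxy) hcxy (mem_sdiff.mp hx).1
  have hSD' : ∀ v ∈ S, c (.inr v) ∉ D := by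
    intro v hv hvD
    refine hSD v hv (mem_sdiff.mpr ⟨hvD, fun hvC => ?_⟩)
    obtain ⟨k, hk, hkv⟩ := mem_image.mp hvC
    exact hc _ _ join_adj_inl_inr hkv (mem_filter.mp hk).2
  refine ⟨R.disjSum S, isClique_disjSum (IsClique.top _) hS, by rw [card_disjSum]; omega, ?_⟩
  rintro (v | v) hv <;> simp only [inl_mem_disjSum, inr_mem_disjSum] at hv
  exacts [(mem_filter.mp hv).2, hSD' v hv]

lemma two_of_not_colorable (hG : ¬ G.Colorable (s + 1)) : VArrowsTwos G s 2 := by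
  classical
  intro α c D hD hc
  by_contra! hno
  let κ : V → Option D := fun v => if h : c v ∈ D then some ⟨c v, h⟩ else none
  have hκ : ∀ x y, G.Adj x y → κ x ≠ κ y := by
    intro x y hxy hκxy
    by_cases hx : c x ∈ D <;> by_cases hy : c y ∈ D <;> simp [κ, hx, hy] at hκxy
    · exact hc x y hxy hκxy hx
    · refine absurd (hno {x, y} ?_ ?_) ?_
      · simpa using isClique_pair.mpr fun _ => hxy
      · simp [card_pair hxy.ne]
      · simp [hx, hy]
  refine hG ((Coloring.mk κ fun h => hκ _ _ h).colorable.mono ?_)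
  simpa using hD

end VArrowsTwos

section Shift

variable (α : Type) [LinearOrder α]

def shiftGraph : SimpleGraph {e : α × α // e.1 < e.2} where
  Adj e f := e.1.2 = f.1.1 ∨ f.1.2 = e.1.1
  symm := ⟨fun _ _ h => h.symm⟩
  loopless := ⟨fun e h => h.elim (e.2.ne ·.symm) (e.2.ne ·.symm)⟩

variable {α}

lemma shiftGraph_cliqueFree_three : (shiftGraph α).CliqueFree 3 := by
  intro S hS
  obtain ⟨e, f, g, -, -, -, rfl⟩ := card_eq_three.mp hS.2
  obtain ⟨hef, heg, hfg⟩ := is3Clique_triple_iff.mp hS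
  rcases e with ⟨⟨e₁, e₂⟩, he⟩
  rcases f with ⟨⟨f₁, f₂⟩, hf⟩
  rcases g with ⟨⟨g₁, g₂⟩, hg⟩
  simp only [shiftGraph] at hef heg hfg he hf hg
  rcases hef with h₁ | h₁ <;> rcases heg with h₂ | h₂ <;> rcases hfg with h₃ | h₃ <;>
    subst_vars <;> order

/-- Under a proper colouring, the sets of colours of the pairs ending at the various points are
pairwise distinct. -/
lemma shiftGraph_not_colorable [Fintype α] {k : ℕ} (hk : 2 ^ k < Fintype.card α) :
    ¬ (shiftGraph α).Colorable k := by
  classical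
  rintro ⟨C⟩
  let f : α → Finset (Fin k) := fun v => {i | ∃ u, ∃ h : u < v, C ⟨(u, v), h⟩ = i}
  have hf : f.Injective := by
    suffices ∀ u v, u < v → f u ≠ f v by
      intro u v huv
      by_contra hne
      rcases lt_or_gt_of_ne hne with h | h
      exacts [this u v h huv, this v u h huv.symm]
    intro u v huv hf
    have hmem : C ⟨(u, v), huv⟩ ∈ f u := hf ▸ mem_filter.mpr ⟨mem_univ _, u, huv, rfl⟩
    obtain ⟨w, hwu, hw⟩ := (mem_filter.mp hmem).2
    exact C.valid (show (shiftGraph α).Adj ⟨(w, u), hwu⟩ ⟨(u, v), huv⟩ from Or.inl rfl) hw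
  have := Fintype.card_le_of_injective f hf
  simp only [Fintype.card_finset, Fintype.card_fin] at this
  omega

end Shift

section Apex

variable {α : Type} [LinearOrder α]

def apexGraph (M : SimpleGraph α) : SimpleGraph (α ⊕ {e : α × α // e.1 < e.2}) where
  Adj
    | .inl x, .inl y => M.Adj x y
    | .inl x, .inr e | .inr e, .inl x => x = e.1.1 ∨ x = e.1.2
    | .inr e, .inr f => (shiftGraph α).Adj e f
  symm := ⟨by rintro (x | e) (y | f) h; exacts [h.symm, h, h, h.symm]⟩
  loopless := ⟨by rintro (x | e) h; exacts [M.loopless.irrefl x h, (shiftGraph α).loopless.irrefl e h]⟩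

variable {M : SimpleGraph α}

lemma apexGraph_cliqueFree_four (hM : M.CliqueFree 3) : (apexGraph M).CliqueFree 4 := by
  intro S hS
  have hl : M.IsClique (S.toLeft : Set α) := hS.1.toLeft fun _ _ h => h
  have hr : (shiftGraph α).IsClique (S.toRight : Set _) := hS.1.toRight fun _ _ h => h
  have hR : 2 ≤ #S.toLeft → #S.toRight ≤ 1 := by
    intro h
    obtain ⟨x, hx, y, hy, hxy⟩ := one_lt_card.mp h
    have hend : ∀ z ∈ S.toLeft, ∀ e ∈ S.toRight, z = e.1.1 ∨ z = e.1.2 := fun z hz e he =>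
      hS.1 (mem_toLeft.mp hz) (mem_toRight.mp he) Sum.inl_ne_inr
    refine card_le_one.mpr fun e he f hf => ?_
    obtain ⟨⟨e₁, e₂⟩, he₁₂⟩ := e
    obtain ⟨⟨f₁, f₂⟩, hf₁₂⟩ := f
    simp only [Subtype.mk.injEq, Prod.mk.injEq]
    rcases hend x hx _ he with rfl | rfl <;> rcases hend y hy _ he with rfl | rfl <;>
      rcases hend _ hx _ hf with h₁ | h₁ <;> rcases hend _ hy _ hf with h₂ | h₂ <;>
      simp only at h₁ h₂ hxy he₁₂ hf₁₂ <;> constructor <;> order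
  have := hl.card_lt_of_cliqueFree hM
  have := hr.card_lt_of_cliqueFree shiftGraph_cliqueFree_three
  have := S.card_toLeft_add_card_toRight
  have := hS.2
  omega

/-- Each edge `xy` of `M` spans a triangle with the pair `(x, y)`. If the removed colours hit all
these triangles, the set of removed colours on the pairs starting at `x` separates the endpoints
of every edge of `M` avoiding them, so `M` would be `(s + 2 ^ s)`-colourable. -/
lemma vArrowsTwos_apexGraph {s : ℕ} (hM : ¬ M.Colorable (s + 2 ^ s)) :
    VArrowsTwos (apexGraph M) s 3 := by
  classical
  intro β c D hD hc
  by_contra! hno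
  let P : α → Finset D := fun x =>
    {j | ∃ e : {e : α × α // e.1 < e.2}, e.1.1 = x ∧ c (.inr e) = j}
  have hP : ∀ x y, M.Adj x y → x < y → c (.inl x) ∉ D → c (.inl y) ∉ D → P x ≠ P y := by
    intro x y hxy hlt hx hy hPxy
    let e : {e : α × α // e.1 < e.2} := ⟨(x, y), hlt⟩
    have he : c (.inr e) ∈ D := by
      have htri : (apexGraph M).IsNClique 3 {.inl x, .inl y, .inr e} :=
        is3Clique_triple_iff.mpr ⟨hxy, Or.inl rfl, Or.inr rfl⟩
      obtain ⟨v, hv, hvD⟩ := hno _ htri.1 htri.2.ge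
      simp only [mem_insert, mem_singleton] at hv
      rcases hv with rfl | rfl | rfl
      exacts [absurd hvD hx, absurd hvD hy, hvD]
    have : ⟨c (.inr e), he⟩ ∈ P y := hPxy ▸ mem_filter.mpr ⟨mem_univ _, e, rfl, rfl⟩
    obtain ⟨f, hf, hfe⟩ := (mem_filter.mp this).2
    exact hc (.inr e) (.inr f) (Or.inl hf.symm) hfe.symm he
  let κ : α → D ⊕ Finset D := fun x =>
    if h : c (.inl x) ∈ D then .inl ⟨_, h⟩ else .inr (P x)
  have hκ : ∀ x y, M.Adj x y → κ x ≠ κ y := by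
    intro x y hxy
    by_cases hx : c (.inl x) ∈ D <;> by_cases hy : c (.inl y) ∈ D <;> simp only [κ, hx, hy,
      dite_true, dite_false, ne_eq, Sum.inl.injEq, Sum.inr.injEq, reduceCtorEq, not_false_eq_true]
    · exact fun h => hc (.inl x) (.inl y) hxy (congrArg Subtype.val h) hx
    · rcases lt_or_gt_of_ne hxy.ne with h | h
      exacts [hP x y hxy h hx hy, (hP y x hxy.symm h hy hx).symm]
  refine hM ((Coloring.mk κ fun h => hκ _ _ h).colorable.mono ?_)
  simpa using Nat.add_le_add hD (Nat.pow_le_pow_right two_pos hD)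

end Apex

theorem exists_vArrowsTwos_cliqueFree (s : ℕ) {p : ℕ} (hp : 2 ≤ p) :
    ∃ (V : Type) (_ : Fintype V) (G : SimpleGraph V),
      VArrowsTwos G s p ∧ G.CliqueFree (p + 1) := by
  induction p using Nat.strong_induction_on with
  | _ p ih =>
  obtain rfl | rfl | hp : p = 2 ∨ p = 3 ∨ 4 ≤ p := by omega
  · exact ⟨_, inferInstance, shiftGraph (Fin (2 ^ (s + 1) + 1)),
      .two_of_not_colorable (shiftGraph_not_colorable (by simp)), shiftGraph_cliqueFree_three⟩
  · let e := (shiftGraph (Fin (2 ^ (s + 2 ^ s) + 1))).overFinIso rfl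
    exact ⟨_, inferInstance, apexGraph ((shiftGraph _).overFin rfl),
      vArrowsTwos_apexGraph ((colorable_congr e).not.mp (shiftGraph_not_colorable (by simp))),
      apexGraph_cliqueFree_four (shiftGraph_cliqueFree_three.comap e.isContained')⟩
  · obtain ⟨V, _, G, hG, hGq⟩ := ih (p - 2) (by omega) (by omega)
    obtain ⟨W, _, T, hT, hTq⟩ := ih 2 (by omega) le_rfl
    refine ⟨W ⊕ V, inferInstance, T.join G, ?_, (hTq.join hGq).mono (by omega)⟩
    have := hT.join hG
    rwa [show 2 + (p - 2) = p by omega] at this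

lemma get_replicate_two_append {s p : ℕ} (i : Fin (List.replicate s 2 ++ [p]).length) :
    (List.replicate s 2 ++ [p]).get i = if (i : ℕ) < s then 2 else p := by
  have := i.2
  simp only [List.length_append, List.length_replicate, List.length_singleton] at this
  split_ifs with h
  · simp [h]
  · simp [show (i : ℕ) = s by omega]

lemma VArrows.vArrowsTwos [Fintype V] {G : SimpleGraph V} {s p : ℕ}
    (hG : VArrows G (List.replicate s 2 ++ [p])) : VArrowsTwos G s p := by
  classical
  intro α c D hD hc
  have hlen : (List.replicate s 2 ++ [p]).length = s + 1 := by simp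
  let ι : D → Fin (List.replicate s 2 ++ [p]).length := fun j =>
    ⟨D.equivFin j, by have := (D.equivFin j).2; omega⟩
  have hι : ∀ j, (ι j : ℕ) < s := fun j => (D.equivFin j).2.trans_le hD
  obtain ⟨i, S, hSi, hS⟩ :=
    hG fun v => if h : c v ∈ D then ι ⟨c v, h⟩ else ⟨s, by omega⟩
  by_cases hi : (i : ℕ) < s
  · rw [get_replicate_two_append, if_pos hi] at hS
    obtain ⟨x, y, hxy, rfl⟩ := card_eq_two.mp hS.2
    have hx := hSi x (by simp)
    have hy := hSi y (by simp)
    have hxD : c x ∈ D := by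
      by_contra h; rw [dif_neg h] at hx; exact hi.ne (by rw [← hx])
    have hyD : c y ∈ D := by
      by_contra h; rw [dif_neg h] at hy; exact hi.ne (by rw [← hy])
    rw [dif_pos hxD] at hx
    rw [dif_pos hyD] at hy
    have : c x = c y := congrArg Subtype.val <| D.equivFin.injective <|
      Fin.ext (by simpa [ι, Fin.ext_iff] using hx.trans hy.symm)
    exact absurd hxD (hc x y (hS.1 (by simp) (by simp) hxy) this)
  · rw [get_replicate_two_append, if_neg hi] at hS
    refine ⟨S, hS.1, hS.2.ge, fun v hv hvD => hi ?_⟩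
    simpa [← hSi v hv, hvD] using hι ⟨c v, hvD⟩

lemma VArrowsTwos.varrows [Fintype V] {G : SimpleGraph V} {s p : ℕ} (hG : VArrowsTwos G s p) :
    VArrows G (List.replicate s 2 ++ [p]) := by
  classical
  intro d
  have hlen : (List.replicate s 2 ++ [p]).length = s + 1 := by simp
  let last : Fin (List.replicate s 2 ++ [p]).length := ⟨s, by omega⟩
  by_cases hedge : ∃ x y, G.Adj x y ∧ d x = d y ∧ d x ≠ last
  · obtain ⟨x, y, hxy, hdxy, hx⟩ := hedge
    have hlt : (d x : ℕ) < s := by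
      have := (d x).2
      have : (d x : ℕ) ≠ s := fun h => hx (Fin.ext h)
      omega
    refine ⟨d x, {x, y}, by simp [hdxy], ?_⟩
    rw [get_replicate_two_append, if_pos hlt]
    exact ⟨by simpa using isClique_pair.mpr fun _ => hxy, card_pair hxy.ne⟩
  · push Not at hedge
    obtain ⟨S, hS, hpS, hSD⟩ := hG _ d (univ.erase last) (by simp [card_erase_of_mem])
      fun x y hxy h hx => (mem_erase.mp hx).1 (hedge x y hxy h)
    obtain ⟨T, hTS, hT⟩ := hS.exists_isNClique hpS
    refine ⟨last, T, fun v hv => by simpa using hSD v (hTS hv), ?_⟩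
    rwa [get_replicate_two_append, if_neg (lt_irrefl _)]

lemma VArrows.of_iso [Fintype V] [Fintype W] {G : SimpleGraph V} {H : SimpleGraph W}
    {a : List ℕ} (hG : VArrows G a) (e : G ≃g H) : VArrows H a := by
  intro c
  obtain ⟨i, S, hSi, hS⟩ := hG (c ∘ e)
  refine ⟨i, S.map e.toEquiv.toEmbedding,
    fun v hv => by obtain ⟨u, hu, rfl⟩ := mem_map.mp hv; exact hSi u hu, ?_, by rw [card_map, hS.2]⟩
  intro x hx y hy hne
  simp only [coe_map, Set.mem_image, mem_coe] at hx hy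
  obtain ⟨x, hx, rfl⟩ := hx
  obtain ⟨y, hy, rfl⟩ := hy
  exact e.map_adj_iff.mpr (hS.1 hx hy (ne_of_apply_ne _ hne))

lemma exists_fin_varrows [Fintype V] {G : SimpleGraph V} {a : List ℕ} {q : ℕ}
    (hG : VArrows G a) (hq : G.CliqueFree q) :
    ∃ G' : SimpleGraph (Fin (Fintype.card V)), VArrows G' a ∧ G'.CliqueFree q :=
  ⟨G.overFin rfl, hG.of_iso (G.overFinIso rfl), hq.comap (G.overFinIso rfl).isContained'⟩

lemma Fv_le_card [Fintype V] {G : SimpleGraph V} {a : List ℕ} {q : ℕ}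
    (hG : VArrows G a) (hq : G.CliqueFree q) : Fv a q ≤ Fintype.card V :=
  Nat.sInf_le (exists_fin_varrows hG hq)

lemma exists_varrows_fin_Fv [Fintype V] {G : SimpleGraph V} {a : List ℕ} {q : ℕ}
    (hG : VArrows G a) (hq : G.CliqueFree q) :
    ∃ G' : SimpleGraph (Fin (Fv a q)), VArrows G' a ∧ G'.CliqueFree q :=
  Nat.sInf_mem (s := {n | ∃ G : SimpleGraph (Fin n), VArrows G a ∧ G.CliqueFree q})
    ⟨_, exists_fin_varrows hG hq⟩

theorem Fv_twos_subadd (r s p : ℕ) (h2 : 2 ≤ s) (hsr : s ≤ r) (hp : 2 ≤ p) :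
    Fv (List.replicate r 2 ++ [p]) (r + p - 1) ≤
      Fv (List.replicate s 2 ++ [p]) (s + p - 1) + (r - s) := by
  obtain ⟨V, _, G₀, hG₀, hG₀q⟩ := exists_vArrowsTwos_cliqueFree s hp
  obtain ⟨G, hG, hGq⟩ := exists_varrows_fin_Fv hG₀.varrows
    (hG₀q.mono (show p + 1 ≤ s + p - 1 by omega))
  have hK := hG.vArrowsTwos.join_top (K := Fin (r - s))
  rw [Fintype.card_fin, Nat.add_sub_cancel' hsr] at hK
  have hKq := (cliqueFree_of_card_lt (G := (⊤ : SimpleGraph (Fin (r - s)))) (n := r - s + 1)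
    (by simp)).join (hGq.mono (show s + p - 1 ≤ s + p - 2 + 1 by omega))
  calc _ ≤ Fintype.card (Fin (r - s) ⊕ Fin (Fv (List.replicate s 2 ++ [p]) (s + p - 1))) :=
        Fv_le_card hK.varrows (hKq.mono (by omega))
    _ = _ := by simp [add_comm]
end

section
/- Let m, m_0, p, q be positive integers with m ≥ m_0 and q > min{m_0, p}. Then F̃_v(m; p; m − m_0 + q) ≤ F̃_v(m_0; p; q) + m − m_0. -/
open SimpleGraph

/-- `G →v [m]^p` : `G` arrows every tuple of positive integers with
`Σ(a_i - 1) + 1 = m` and all entries at most `p`. -/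
def VArrowsUni (m p : ℕ) {V : Type} [Fintype V] (G : SimpleGraph V) : Prop :=
  ∀ a : List ℕ, a ≠ [] → (∀ x ∈ a, 0 < x) → (a.map (· - 1)).sum + 1 = m →
    (∀ x ∈ a, x ≤ p) → VArrows G a

/-- The number `F̃_v(m; p; q)`. -/
noncomputable def Fvt (m p q : ℕ) : ℕ :=
  sInf {n : ℕ | ∃ G : SimpleGraph (Fin n), VArrowsUni m p G ∧ G.CliqueFree q}


/-!
Adding to a graph a vertex joined to all others (a cone) raises both `m` and the clique bound by
one: in a colouring, the class of the apex's colour `i` either needs only the apex (`a i = 1`), or,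
with `a i` lowered by one, the base graph supplies a clique that the apex completes. Applying this
`m - m₀` times to a smallest graph of `H̃(m₀; p; q)` gives the bound.

The real work is that `H̃(m₀; p; q)` is nonempty. A graph with clique number at most
`s = min m₀ p` in which every `m₀`-colouring has a monochromatic `s`-clique arrows `[m₀]^p`:
a vertex whose colour has `a i = 1` is a clique by itself, and fewer than `m₀` colours have
`a i ≥ 2`, each needing at most `s` vertices. Such graphs exist by Folkman's induction on the
clique size and the number `k + 1` of colours: take `r > (k + 1) (|C| - 1)` copies of a graph `Y`
for `p` and `k + 1` colours, and, for every injection `T` of the vertices of a graph `C` for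
`p + 1` and `k` colours into the copies, a copy of `C` whose vertex `u` is joined to all of the
`T u`-th copy of `Y`. By pigeonhole some `|C|` copies of `Y` have monochromatic `p`-cliques of
one colour `j`; in the copy of `C` attached to them, either a vertex has colour `j` and extends
such a clique, or `C` is coloured with the other `k` colours.
-/

open Finset

namespace SimpleGraph

variable {α β : Type*} {G : SimpleGraph α} {H : SimpleGraph β} {n : ℕ}

lemma IsClique.card_lt_of_cliqueFree_s13 (hG : G.CliqueFree n) {s : Finset α}
    (hs : G.IsClique (s : Set α)) : #s < n := by
  by_contra! h
  obtain ⟨t, hts, rfl⟩ := exists_subset_card_eq h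
  exact hG t ⟨hs.subset (by simpa), rfl⟩

lemma IsNClique.exists_subset {s : Finset α} {k : ℕ} (hs : G.IsNClique n s) (hk : k ≤ n) :
    ∃ t ⊆ s, G.IsNClique k t := by
  obtain ⟨t, hts, rfl⟩ := exists_subset_card_eq (hk.trans_eq hs.card_eq.symm)
  exact ⟨t, hts, hs.isClique.subset (by simpa), rfl⟩

lemma CliqueFree.of_hom (f : G →g H) (hH : H.CliqueFree n) : G.CliqueFree n := by
  rw [cliqueFree_iff] at hH ⊢
  exact ⟨fun c => hH.false ((f.comp c.toHom).toCopy (Hom.injective_of_top_hom _))⟩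

lemma IsNClique.map_of_le_comap {f : α ↪ β} (hf : G ≤ H.comap f) {s : Finset α}
    (hs : G.IsNClique n s) : H.IsNClique n (s.map f) :=
  hs.map.mono ((map_le_iff_le_comap f G H).2 hf)

end SimpleGraph

variable {V : Type}

/-- `VArrows G a` is `VArrowsFamily G a.get`. -/
def VArrowsFamily {ι : Type} (G : SimpleGraph V) (a : ι → ℕ) : Prop :=
  ∀ c : V → ι, ∃ i, ∃ S : Finset V, (∀ v ∈ S, c v = i) ∧ G.IsNClique (a i) S

lemma VArrowsFamily.of_comp_equiv {ι ι' : Type} {G : SimpleGraph V} {a : ι' → ℕ} (e : ι ≃ ι')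
    (h : VArrowsFamily G (a ∘ e)) : VArrowsFamily G a := by
  intro c
  obtain ⟨i, S, hSc, hS⟩ := h (e.symm ∘ c)
  exact ⟨e i, S, fun v hv => by simp [← hSc v hv], hS⟩

lemma VArrowsFamily.of_copy {ι W : Type} {G : SimpleGraph V} {H : SimpleGraph W} {a : ι → ℕ}
    (h : VArrowsFamily G a) (f : G.Copy H) : VArrowsFamily H a := by
  intro c
  obtain ⟨i, S, hSc, hS⟩ := h (c ∘ f)
  refine ⟨i, S.map f.toEmbedding, ?_, hS.map_of_le_comap fun _ _ => f.toHom.map_adj⟩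
  exact forall_mem_map.2 hSc

structure IsUniTuple (m p : ℕ) {ι : Type} [Fintype ι] (a : ι → ℕ) : Prop where
  nonempty : Nonempty ι
  pos : ∀ i, 0 < a i
  sum_eq : ∑ i, (a i - 1) + 1 = m
  le_p : ∀ i, a i ≤ p

lemma varrowsUni_iff [Fintype V] {m p : ℕ} {G : SimpleGraph V} :
    VArrowsUni m p G ↔
      ∀ (ι : Type) [Fintype ι] (a : ι → ℕ), IsUniTuple m p a → VArrowsFamily G a := by
  constructor
  · intro hG ι _ a ha
    have := ha.nonempty
    set e := (Fintype.equivFin ι).symm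
    have hl : VArrowsFamily G (List.ofFn (a ∘ e)).get := hG (List.ofFn (a ∘ e))
      (by rw [Ne, List.ofFn_eq_nil_iff]; exact Fintype.card_ne_zero) (by simp [ha.pos])
      (by simpa [List.sum_ofFn, e.sum_comp (fun i => a i - 1)] using ha.sum_eq)
      (by simp [ha.le_p])
    refine VArrowsFamily.of_comp_equiv ((finCongr (List.length_ofFn (f := a ∘ e))).trans e) ?_
    convert hl
    funext i
    exact (List.get_ofFn (a ∘ e) i).symm
  · intro h a ha hpos hsum hle
    exact h (Fin a.length) a.get
      ⟨⟨⟨0, List.length_pos_iff.2 ha⟩⟩, fun i => hpos _ (a.get_mem i),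
        (Fin.sum_univ_fun_getElem a (· - 1)).symm ▸ hsum, fun i => hle _ (a.get_mem i)⟩

namespace IsUniTuple

variable {m p : ℕ} {ι : Type} [Fintype ι] {a : ι → ℕ}

lemma le_m (ha : IsUniTuple m p a) (i : ι) : a i ≤ m := by
  have := single_le_sum (fun j _ => Nat.zero_le (a j - 1)) (mem_univ i)
  have := ha.sum_eq
  have := ha.pos i
  omega

lemma card_two_le_lt (ha : IsUniTuple m p a) : Fintype.card {i // 2 ≤ a i} < m := by
  rw [Fintype.card_subtype]
  have : #{i | 2 ≤ a i} ≤ ∑ i, (a i - 1) := calc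
    #{i | 2 ≤ a i} ≤ ∑ i ∈ {i | 2 ≤ a i}, (a i - 1) := by
      simpa using card_nsmul_le_sum _ (fun i => a i - 1) 1 fun i hi => by
        have := (mem_filter.1 hi).2
        omega
    _ ≤ ∑ i, (a i - 1) := sum_le_sum_of_subset (filter_subset _ _)
  have := ha.sum_eq
  omega

lemma min_pos (ha : IsUniTuple m p a) : 0 < min m p := by
  obtain ⟨i⟩ := ha.nonempty
  have := ha.le_m i
  have := ha.le_p i
  have := ha.pos i
  omega

lemma update_pred [DecidableEq ι] (ha : IsUniTuple (m + 1) p a) {j : ι} (hj : 2 ≤ a j) :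
    IsUniTuple m p (Function.update a j (a j - 1)) where
  nonempty := ha.nonempty
  pos i := by
    rcases eq_or_ne i j with rfl | hij
    · simp only [Function.update_self]; omega
    · simpa [Function.update_of_ne hij] using ha.pos i
  sum_eq := by
    have h₁ := add_sum_erase univ (fun i => a i - 1) (mem_univ j)
    have h₂ := add_sum_erase univ (fun i => Function.update a j (a j - 1) i - 1) (mem_univ j)
    have h₃ : ∑ i ∈ univ.erase j, (Function.update a j (a j - 1) i - 1) =
        ∑ i ∈ univ.erase j, (a i - 1) :=
      sum_congr rfl fun i hi => by rw [Function.update_of_ne (ne_of_mem_erase hi)]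
    have := ha.sum_eq
    simp only [Function.update_self] at h₂
    omega
  le_p i := by
    rcases eq_or_ne i j with rfl | hij
    · simp only [Function.update_self]; have := ha.le_p i; omega
    · simpa [Function.update_of_ne hij] using ha.le_p i

end IsUniTuple

lemma VArrowsUni.of_copy [Fintype V] {W : Type} [Fintype W] {m p : ℕ} {G : SimpleGraph V}
    {H : SimpleGraph W} (hG : VArrowsUni m p G) (f : G.Copy H) : VArrowsUni m p H :=
  fun a h₁ h₂ h₃ h₄ => VArrowsFamily.of_copy (hG a h₁ h₂ h₃ h₄) f

section Fvt

variable {m p q : ℕ}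

lemma card_mem_setOf_Fvt [Fintype V] {G : SimpleGraph V} (hA : VArrowsUni m p G)
    (hC : G.CliqueFree q) :
    Fintype.card V ∈ {n | ∃ G : SimpleGraph (Fin n), VArrowsUni m p G ∧ G.CliqueFree q} :=
  ⟨G.overFin rfl, hA.of_copy (G.overFinIso rfl).toCopy,
    hC.comap (G.overFinIso rfl).symm.isContained⟩

lemma Fvt_le_card [Fintype V] {G : SimpleGraph V} (hA : VArrowsUni m p G) (hC : G.CliqueFree q) :
    Fvt m p q ≤ Fintype.card V :=
  Nat.sInf_le (card_mem_setOf_Fvt hA hC)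

lemma exists_graph_card_Fvt [Fintype V] {G : SimpleGraph V} (hA : VArrowsUni m p G)
    (hC : G.CliqueFree q) :
    ∃ G : SimpleGraph (Fin (Fvt m p q)), VArrowsUni m p G ∧ G.CliqueFree q :=
  Nat.sInf_mem ⟨_, card_mem_setOf_Fvt hA hC⟩

end Fvt

namespace SimpleGraph

def cone (G : SimpleGraph V) : SimpleGraph (Option V) where
  Adj
    | none, none => False
    | none, some _ | some _, none => True
    | some u, some v => G.Adj u v
  symm := ⟨by rintro (_ | u) (_ | v) h; exacts [h, trivial, trivial, h.symm]⟩
  loopless := ⟨by rintro (_ | u) h; exacts [h, h.ne rfl]⟩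

variable {G : SimpleGraph V}

@[simp] lemma cone_adj_none {v : V} : G.cone.Adj none (some v) := trivial

lemma le_comap_some_cone : G ≤ G.cone.comap Function.Embedding.some := fun _ _ h => h

lemma CliqueFree.cone {q : ℕ} (h : G.CliqueFree q) : G.cone.CliqueFree (q + 1) := by
  classical
  intro S hS
  have hlt : #S.eraseNone < q := IsClique.card_lt_of_cliqueFree_s13 h fun x hx y hy hxy =>
    hS.isClique (mem_eraseNone.1 hx) (mem_eraseNone.1 hy) (by simpa using hxy)
  have := card_eraseNone_eq_card_erase S
  have := pred_card_le_card_erase (s := S) (a := none)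
  have := hS.card_eq
  omega

end SimpleGraph

lemma VArrowsUni.cone [Fintype V] {G : SimpleGraph V} {m p : ℕ} (hG : VArrowsUni m p G) :
    VArrowsUni (m + 1) p G.cone := by
  classical
  refine varrowsUni_iff.2 fun ι _ a ha c => ?_
  by_cases hj : a (c none) = 1
  · exact ⟨c none, {none}, by simp, by simp [hj]⟩
  have hj2 : 2 ≤ a (c none) := by
    have := ha.pos (c none)
    omega
  obtain ⟨i, S, hSc, hS⟩ := varrowsUni_iff.1 hG ι _ (ha.update_pred hj2) (c ∘ some)
  have hS' := hS.map_of_le_comap le_comap_some_cone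
  by_cases hij : i = c none
  · subst hij
    refine ⟨c none, insert none (S.map Function.Embedding.some), ?_, ?_⟩
    · simpa using hSc
    · have := hS'.insert (a := none) (by simp)
      rwa [Function.update_self, Nat.sub_add_cancel (by omega)] at this
  · exact ⟨i, S.map Function.Embedding.some, forall_mem_map.2 hSc,
      by simpa [Function.update_of_ne hij] using hS'⟩

lemma exists_cone_iterate [Fintype V] {G : SimpleGraph V} {m p q : ℕ} (hA : VArrowsUni m p G)
    (hC : G.CliqueFree q) (t : ℕ) :
    ∃ (W : Type) (_ : Fintype W) (H : SimpleGraph W), Fintype.card W = Fintype.card V + t ∧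
      VArrowsUni (m + t) p H ∧ H.CliqueFree (q + t) := by
  induction t with
  | zero => exact ⟨V, inferInstance, G, rfl, hA, hC⟩
  | succ t ih =>
    obtain ⟨W, _, H, hW, hHA, hHC⟩ := ih
    exact ⟨Option W, inferInstance, H.cone, by simp [hW, add_assoc], hHA.cone, hHC.cone⟩

/-- `G →v (p, …, p)` with `k` colours. Monochromatic is stated without naming the colour, so
that the empty clique qualifies even when `k = 0`. -/
def VArrowsPow (G : SimpleGraph V) (k p : ℕ) : Prop :=
  ∀ c : V → Fin k, ∃ S : Finset V, G.IsNClique p S ∧ ∀ v ∈ S, ∀ w ∈ S, c v = c w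

lemma VArrowsPow.exists_of_card_le {G : SimpleGraph V} {k p : ℕ} (h : VArrowsPow G k p)
    {α : Type*} [Fintype α] (hα : Fintype.card α ≤ k) (c : V → α) :
    ∃ S : Finset V, G.IsNClique p S ∧ ∀ v ∈ S, ∀ w ∈ S, c v = c w := by
  let f : α ↪ Fin k := (Fintype.equivFin α).toEmbedding.trans (Fin.castLEEmb hα)
  obtain ⟨S, hS, hSc⟩ := h (f ∘ c)
  exact ⟨S, hS, fun v hv w hw => f.injective (hSc v hv w hw)⟩

lemma VArrowsPow.varrowsUni [Fintype V] {G : SimpleGraph V} {m p : ℕ}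
    (h : VArrowsPow G m (min m p)) : VArrowsUni m p G := by
  refine varrowsUni_iff.2 fun ι _ a ha c => ?_
  by_cases hsingle : ∃ v, a (c v) = 1
  · obtain ⟨v, hv⟩ := hsingle
    exact ⟨c v, {v}, by simp, by simp [hv]⟩
  push Not at hsingle
  have hbig (v : V) : 2 ≤ a (c v) := by
    have := ha.pos (c v)
    have := hsingle v
    omega
  obtain ⟨S, hS, hSc⟩ :=
    h.exists_of_card_le ha.card_two_le_lt.le fun v => (⟨c v, hbig v⟩ : {i // 2 ≤ a i})
  obtain ⟨v₀, hv₀⟩ := card_pos.1 (hS.card_eq ▸ ha.min_pos)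
  obtain ⟨T, hTS, hT⟩ := hS.exists_subset (le_min (ha.le_m _) (ha.le_p (c v₀)))
  exact ⟨c v₀, T, fun v hv => congrArg Subtype.val (hSc v (hTS hv) v₀ hv₀), hT⟩

lemma exists_forall_eq_of_forall_eq {α β : Type*} [Nonempty β] {c : α → β} {S : Finset α}
    (h : ∀ v ∈ S, ∀ w ∈ S, c v = c w) : ∃ b, ∀ v ∈ S, c v = b := by
  rcases S.eq_empty_or_nonempty with rfl | ⟨w, hw⟩
  · exact ⟨Classical.arbitrary β, by simp⟩
  · exact ⟨c w, fun v hv => h v hv w hw⟩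

lemma Fintype.exists_embedding_forall_eq {α β γ : Type*} [Fintype α] [Fintype β] [Fintype γ]
    (f : α → β) (h : card β * (card γ - 1) < card α) : ∃ b, ∃ T : γ ↪ α, ∀ x, f (T x) = b := by
  classical
  obtain ⟨b, hb⟩ := exists_lt_card_fiber_of_mul_lt_card f h
  obtain ⟨T⟩ := Function.Embedding.nonempty_of_card_le (α := γ) (β := {x // f x = b})
    (by rw [card_subtype]; omega)
  exact ⟨b, T.trans (Function.Embedding.subtype _), fun x => (T x).2⟩

variable {VY VC : Type}

def folkmanGraph (r : ℕ) (GY : SimpleGraph VY) (GC : SimpleGraph VC) :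
    SimpleGraph ((Fin r × VY) ⊕ ((VC ↪ Fin r) × VC)) where
  Adj
    | .inl (i, y), .inl (i', y') => i = i' ∧ GY.Adj y y'
    | .inl (i, _), .inr (T, u) | .inr (T, u), .inl (i, _) => T u = i
    | .inr (T, u), .inr (T', u') => T = T' ∧ GC.Adj u u'
  symm := ⟨by
    rintro (⟨i, y⟩ | ⟨T, u⟩) (⟨i', y'⟩ | ⟨T', u'⟩) h
    exacts [⟨h.1.symm, h.2.symm⟩, h, h, ⟨h.1.symm, h.2.symm⟩]⟩
  loopless := ⟨by
    rintro (⟨i, y⟩ | ⟨T, u⟩) h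
    exacts [h.2.ne rfl, h.2.ne rfl]⟩

section folkmanGraph

variable {r : ℕ} {GY : SimpleGraph VY} {GC : SimpleGraph VC}

@[simp] lemma folkmanGraph_adj_inr_inl {i : Fin r} {y : VY} {T : VC ↪ Fin r} {u : VC} :
    (folkmanGraph r GY GC).Adj (.inr (T, u)) (.inl (i, y)) ↔ T u = i := Iff.rfl

lemma folkmanGraph_le_comap_inl (i : Fin r) :
    GY ≤ (folkmanGraph r GY GC).comap
      ((Function.Embedding.sectR i VY).trans Function.Embedding.inl) :=
  fun _ _ h => ⟨rfl, h⟩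

lemma folkmanGraph_le_comap_inr (T : VC ↪ Fin r) :
    GC ≤ (folkmanGraph r GY GC).comap
      ((Function.Embedding.sectR T VC).trans Function.Embedding.inr) :=
  fun _ _ h => ⟨rfl, h⟩

lemma folkmanGraph_cliqueFree {p : ℕ} (hY : GY.CliqueFree (p + 1)) (hC : GC.CliqueFree (p + 2)) :
    (folkmanGraph r GY GC).CliqueFree (p + 2) := by
  classical
  intro S hS
  have hL : #S.toLeft < p + 1 := by
    refine IsClique.card_lt_of_cliqueFree_s13
      (G := (folkmanGraph r GY GC).comap Sum.inl) (hY.of_hom ⟨Prod.snd, fun h => h.2⟩) ?_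
    · intro x hx y hy hxy
      exact hS.isClique (mem_toLeft.1 hx) (mem_toLeft.1 hy) (by simpa using hxy)
  have hR : #S.toRight < p + 2 := by
    refine IsClique.card_lt_of_cliqueFree_s13
      (G := (folkmanGraph r GY GC).comap Sum.inr) (hC.of_hom ⟨Prod.snd, fun h => h.2⟩) ?_
    · intro x hx y hy hxy
      exact hS.isClique (mem_toRight.1 hx) (mem_toRight.1 hy) (by simpa using hxy)
  -- two vertices of one copy of `GC` have their neighbours in different copies of `GY`
  have hLR : S.toLeft.Nonempty → #S.toRight ≤ 1 := by
    rintro ⟨⟨i, y⟩, hiy⟩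
    refine card_le_one.2 fun ⟨T, u⟩ hu ⟨T', u'⟩ hu' => by_contra fun hne => ?_
    obtain ⟨rfl, huu'⟩ : T = T' ∧ GC.Adj u u' :=
      hS.isClique (mem_toRight.1 hu) (mem_toRight.1 hu') (by simpa using hne)
    have h₁ : T u = i := hS.isClique (mem_toRight.1 hu) (mem_toLeft.1 hiy) (by simp)
    have h₂ : T u' = i := hS.isClique (mem_toRight.1 hu') (mem_toLeft.1 hiy) (by simp)
    exact huu'.ne (T.injective (h₁.trans h₂.symm))
  have hcard := card_toLeft_add_card_toRight (u := S)
  rw [hS.card_eq] at hcard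
  rcases S.toLeft.eq_empty_or_nonempty with h | h
  · rw [h, card_empty] at hcard
    omega
  · have := hLR h
    omega

lemma folkmanGraph_varrowsPow [Fintype VY] [Fintype VC] {k p : ℕ}
    (hr : (k + 1) * (Fintype.card VC - 1) < r) (hY : VArrowsPow GY (k + 1) p)
    (hC : VArrowsPow GC k (p + 1)) : VArrowsPow (folkmanGraph r GY GC) (k + 1) (p + 1) := by
  classical
  intro c
  have hYc (i : Fin r) : ∃ S j, GY.IsNClique p S ∧ ∀ y ∈ S, c (.inl (i, y)) = j := by
    obtain ⟨S, hS, hSc⟩ := hY fun y => c (.inl (i, y))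
    obtain ⟨j, hj⟩ := exists_forall_eq_of_forall_eq hSc
    exact ⟨S, j, hS, hj⟩
  choose SY jY hSY hjY using hYc
  -- `T` picks `card VC` copies of `GY` whose monochromatic cliques share the colour `j`
  obtain ⟨j, T, hT⟩ := Fintype.exists_embedding_forall_eq jY (by simpa using hr)
  by_cases hu : ∃ u, c (.inr (T, u)) = j
  · obtain ⟨u, hu⟩ := hu
    let S := (SY (T u)).map
      ((Function.Embedding.sectR (T u) VY).trans (Function.Embedding.inl (β := (VC ↪ Fin r) × VC)))
    have hcol : ∀ v ∈ insert (.inr (T, u)) S, c v = j := by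
      simp only [mem_insert, forall_eq_or_imp, S, forall_mem_map]
      exact ⟨hu, fun y hy => (hjY _ y hy).trans (hT u)⟩
    refine ⟨insert (.inr (T, u)) S, ?_, fun v hv w hw => (hcol v hv).trans (hcol w hw).symm⟩
    refine ((hSY (T u)).map_of_le_comap (folkmanGraph_le_comap_inl _)).insert ?_
    simp
  · push Not at hu
    obtain ⟨S, hS, hSc⟩ := hC.exists_of_card_le (α := {x // x ≠ j}) (by simp)
      fun u => ⟨c (.inr (T, u)), hu u⟩
    refine ⟨S.map
      ((Function.Embedding.sectR T VC).trans (Function.Embedding.inr (α := Fin r × VY))),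
      hS.map_of_le_comap (folkmanGraph_le_comap_inr T), ?_⟩
    simpa using fun v hv w hw => congrArg Subtype.val (hSc v hv w hw)

end folkmanGraph

theorem exists_cliqueFree_varrowsPow : ∀ p k : ℕ,
    ∃ (V : Type) (_ : Fintype V) (G : SimpleGraph V), G.CliqueFree (p + 1) ∧ VArrowsPow G k p
  | 0, _ =>
    ⟨Empty, inferInstance, ⊥, cliqueFree_one.2 inferInstance, fun _ => ⟨∅, by simp, by simp⟩⟩
  | p + 1, 0 => ⟨Fin (p + 1), inferInstance, ⊤, cliqueFree_of_card_lt (by simp),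
      fun c => (c 0).elim0⟩
  | p + 1, k + 1 => by
    obtain ⟨VY, _, GY, hY, hYa⟩ := exists_cliqueFree_varrowsPow p (k + 1)
    obtain ⟨VC, _, GC, hC, hCa⟩ := exists_cliqueFree_varrowsPow (p + 1) k
    classical
    exact ⟨_, inferInstance, folkmanGraph ((k + 1) * (Fintype.card VC - 1) + 1) GY GC,
      folkmanGraph_cliqueFree hY hC, folkmanGraph_varrowsPow (Nat.lt_succ_self _) hYa hCa⟩

theorem Fvt_subadd_general (m m₀ p q : ℕ) (hm : m₀ ≤ m) (hq' : min m₀ p < q) :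
    Fvt m p (m - m₀ + q) ≤ Fvt m₀ p q + (m - m₀) := by
  obtain ⟨V, _, G, hGC, hGA⟩ := exists_cliqueFree_varrowsPow (min m₀ p) m₀
  obtain ⟨G₀, hA₀, hC₀⟩ := exists_graph_card_Fvt hGA.varrowsUni (hGC.mono hq')
  obtain ⟨W, _, H, hW, hA, hC⟩ := exists_cone_iterate hA₀ hC₀ (m - m₀)
  rw [Nat.add_sub_cancel' hm] at hA
  rw [add_comm] at hC
  simpa [hW] using Fvt_le_card hA hC

theorem Fvt_subadd (m m₀ p q : ℕ) (h₀ : 0 < m₀) (hp : 0 < p) (hq : 0 < q)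
    (hm : m₀ ≤ m) (hq' : min m₀ p < q) :
    Fvt m p (m - m₀ + q) ≤ Fvt m₀ p q + (m - m₀) :=
  Fvt_subadd_general m m₀ p q hm hq'
end
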